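/- arXiv:1110.6621 — 10 statements merged into one kernel-verified Lean document; each statement's English description precedes it below -/
import Mathlib

section
/- The assignment s_i ↦ s_i⁻¹, a ↦ −b c⁻¹, b ↦ −a c⁻¹, c ↦ c⁻¹ induces a well-defined ℤ-algebra automorphism Φ of the cubic Hecke algebra A_n. -/
/- STATEMENT 3: The assignment `s_i ↦ s_i⁻¹`, `a ↦ -b c⁻¹`, `b ↦ -a c⁻¹`, `c ↦ c⁻¹`
induces a well-defined ℤ-algebra automorphism `Φ` of the cubic Hecke algebra `A_n`.
We construct the generic base ring `R = ℤ[a,b,c,c⁻¹]` as Laurent polynomials in `c`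
over `ℤ[a,b]`, the braid group `B_n` as a presented group, and `A_n` as the quotient
of the monoid algebra `R[B_n]` by the cubic relations. -/

open FreeGroup in
/-- The braid relations on `m` generators (so for the braid group `B_{m+1}`). -/
def braidRels (m : ℕ) : Set (FreeGroup (Fin m)) :=
  {r | (∃ i j : Fin m, (i : ℕ) + 1 = (j : ℕ) ∧
          r = of i * of j * of i * (of j)⁻¹ * (of i)⁻¹ * (of j)⁻¹) ∨
       (∃ i j : Fin m, (i : ℕ) + 2 ≤ (j : ℕ) ∧
          r = of i * of j * (of i)⁻¹ * (of j)⁻¹)}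

/-- The braid group on `n` strands. -/
abbrev BraidGroup (n : ℕ) := PresentedGroup (braidRels (n - 1))

noncomputable section

/-- The generic base ring `R = ℤ[a,b,c,c⁻¹]`. -/
abbrev GenR : Type := LaurentPolynomial (MvPolynomial (Fin 2) ℤ)

/-- The parameter `a`. -/
def aR : GenR := LaurentPolynomial.C (MvPolynomial.X 0)
/-- The parameter `b`. -/
def bR : GenR := LaurentPolynomial.C (MvPolynomial.X 1)
/-- The parameter `c`. -/
def cR : GenR := LaurentPolynomial.T 1
/-- The parameter `c⁻¹`. -/
def cInv : GenR := LaurentPolynomial.T (-1)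

/-- The generator `s_i` inside the monoid algebra `R[B_n]`. -/
def sGen (n : ℕ) (i : Fin (n - 1)) : MonoidAlgebra GenR (BraidGroup n) :=
  MonoidAlgebra.of GenR (BraidGroup n) (PresentedGroup.of i)

/-- The inverse generator `s_i⁻¹` inside `R[B_n]`. -/
def sGenInv (n : ℕ) (i : Fin (n - 1)) : MonoidAlgebra GenR (BraidGroup n) :=
  MonoidAlgebra.of GenR (BraidGroup n) (PresentedGroup.of i)⁻¹

/-- The cubic relations `s_i³ = a s_i² + b s_i + c`. -/
def cubicRel (n : ℕ) :
    MonoidAlgebra GenR (BraidGroup n) → MonoidAlgebra GenR (BraidGroup n) → Prop :=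
  fun x y => ∃ i : Fin (n - 1), x = sGen n i ^ 3 ∧
    y = aR • sGen n i ^ 2 + bR • sGen n i + cR • 1

/-- The generic cubic Hecke algebra `A_n`. -/
abbrev CubicHecke (n : ℕ) := RingQuot (cubicRel n)

/-- The image of `s_i` in `A_n`. -/
def sH (n : ℕ) (i : Fin (n - 1)) : CubicHecke n :=
  RingQuot.mkAlgHom GenR (cubicRel n) (sGen n i)

/-- The image of `s_i⁻¹` in `A_n`. -/
def sHinv (n : ℕ) (i : Fin (n - 1)) : CubicHecke n :=
  RingQuot.mkAlgHom GenR (cubicRel n) (sGenInv n i)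

namespace Stmt3Aux
open LaurentPolynomial

open LaurentPolynomial

lemma cInv_mul_cR : cInv * cR = 1 := by
  rw [cInv, cR, ← T_add]; norm_num

lemma cR_mul_cInv : cR * cInv = 1 := by
  rw [cR, cInv, ← T_add]; norm_num

def cUnit : GenRˣ := ⟨cInv, cR, cInv_mul_cR, cR_mul_cInv⟩

def fS : MvPolynomial (Fin 2) ℤ →+* GenR :=
  MvPolynomial.eval₂Hom (Int.castRingHom GenR) ![-bR * cInv, -aR * cInv]

def gZ : Multiplicative ℤ →* GenR :=
  (Units.coeHom GenR).comp (zpowersHom GenRˣ cUnit)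

def sigma : GenR →+* GenR :=
  AddMonoidAlgebra.liftNCRingHom fS gZ (fun _ _ => Commute.all _ _)

lemma cUnit_zpow (k : ℤ) : ((cUnit ^ k : GenRˣ) : GenR) = T (-k) := by
  induction k using Int.induction_on with
  | zero => simp [T_zero]
  | succ i ih =>
      rw [zpow_add_one, Units.val_mul, ih, show ((cUnit : GenRˣ) : GenR) = T (-1) from rfl,
        ← T_add]
      congr 1; ring
  | pred i ih =>
      rw [zpow_sub_one, Units.val_mul, ih, show ((cUnit⁻¹ : GenRˣ) : GenR) = T 1 from rfl,
        ← T_add]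
      congr 1; ring

lemma sigma_single (k : ℤ) (s : MvPolynomial (Fin 2) ℤ) :
    sigma (AddMonoidAlgebra.single k s) = fS s * T (-k) := by
  show AddMonoidAlgebra.liftNC (fS : _ →+ GenR) gZ (AddMonoidAlgebra.single k s) = _
  rw [AddMonoidAlgebra.liftNC_single]
  congr 1
  show ((cUnit ^ (Multiplicative.toAdd (Multiplicative.ofAdd k)) : GenRˣ) : GenR) = T (-k)
  rw [toAdd_ofAdd, cUnit_zpow]

lemma sigma_C (p : MvPolynomial (Fin 2) ℤ) : sigma (LaurentPolynomial.C p) = fS p := by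
  have : (LaurentPolynomial.C p : GenR) = AddMonoidAlgebra.single 0 p := rfl
  rw [this, sigma_single]
  norm_num [T_zero]

lemma sigma_T (k : ℤ) : sigma (T k) = T (-k) := by
  have : (T k : GenR) = AddMonoidAlgebra.single k 1 := rfl
  rw [this, sigma_single, map_one, one_mul]

lemma sigma_aR : sigma aR = -bR * cInv := by
  rw [aR, sigma_C, fS]
  simp

lemma sigma_bR : sigma bR = -aR * cInv := by
  rw [bR, sigma_C, fS]
  simp

lemma sigma_cR : sigma cR = cInv := sigma_T 1

lemma sigma_cInv : sigma cInv = cR := by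
  have := sigma_T (-1)
  rwa [neg_neg] at this

lemma sigma_sigma_C (b : MvPolynomial (Fin 2) ℤ) :
    sigma (sigma (LaurentPolynomial.C b)) = LaurentPolynomial.C b := by
  induction b using MvPolynomial.induction_on with
  | C r =>
      have : (LaurentPolynomial.C (MvPolynomial.C r) : GenR) = (r : GenR) := by
        push_cast [← map_intCast (LaurentPolynomial.C : MvPolynomial (Fin 2) ℤ →+* GenR),
          ← map_intCast (MvPolynomial.C : ℤ →+* MvPolynomial (Fin 2) ℤ)]
        rfl
      rw [this, map_intCast, map_intCast]
  | add p q hp hq => rw [map_add, map_add, map_add, hp, hq]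
  | mul_X p i hp =>
      rw [map_mul, map_mul, map_mul, hp]
      refine congrArg (_ * ·) ?_
      fin_cases i
      · show sigma (sigma aR) = aR
        rw [sigma_aR, map_mul, map_neg, sigma_bR, sigma_cInv]
        linear_combination aR * cInv_mul_cR
      · show sigma (sigma bR) = bR
        rw [sigma_bR, map_mul, map_neg, sigma_aR, sigma_cInv]
        linear_combination bR * cInv_mul_cR

lemma sigma_sigma : sigma.comp sigma = RingHom.id GenR := by
  apply AddMonoidAlgebra.ringHom_ext
  · intro b
    have hb : (AddMonoidAlgebra.single (0:ℤ) b : GenR) = LaurentPolynomial.C b := rfl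
    rw [hb]
    simpa only [RingHom.comp_apply, RingHom.id_apply] using sigma_sigma_C b
  · intro a
    have ha : (AddMonoidAlgebra.single (a:ℤ) (1 : MvPolynomial (Fin 2) ℤ) : GenR) = T a := rfl
    rw [ha]
    simp only [RingHom.comp_apply, RingHom.id_apply, sigma_T, neg_neg]



lemma relator_eq_one {α : Type*} {rels : Set (FreeGroup α)} {r : FreeGroup α} (h : r ∈ rels) :
    PresentedGroup.mk rels r = 1 :=
  (QuotientGroup.eq_one_iff r).mpr (Subgroup.subset_normalClosure h)

lemma braid_rel1 {m : ℕ} {i j : Fin m} (hij : (i : ℕ) + 1 = j) :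
    (PresentedGroup.of (rels := braidRels m) i) * .of j * .of i = .of j * .of i * .of j := by
  have h := relator_eq_one (rels := braidRels m) (Or.inl ⟨i, j, hij, rfl⟩)
  simp only [map_mul, map_inv] at h
  set x := PresentedGroup.of (rels := braidRels m) i with hx
  set y := PresentedGroup.of (rels := braidRels m) j with hy
  have h' : x * y * x * y⁻¹ * x⁻¹ * y⁻¹ = 1 := h
  rw [show x * y * x = (x * y * x * y⁻¹ * x⁻¹ * y⁻¹) * (y * x * y) by group, h', one_mul]

lemma braid_rel2 {m : ℕ} {i j : Fin m} (hij : (i : ℕ) + 2 ≤ j) :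
    (PresentedGroup.of (rels := braidRels m) i) * .of j = .of j * .of i := by
  have h := relator_eq_one (rels := braidRels m) (Or.inr ⟨i, j, hij, rfl⟩)
  simp only [map_mul, map_inv] at h
  set x := PresentedGroup.of (rels := braidRels m) i
  set y := PresentedGroup.of (rels := braidRels m) j
  have h' : x * y * x⁻¹ * y⁻¹ = 1 := h
  rw [show x * y = (x * y * x⁻¹ * y⁻¹) * (y * x) by group, h', one_mul]

lemma braid_inv_rels (m : ℕ) : ∀ r ∈ braidRels m,
    FreeGroup.lift (fun i => (PresentedGroup.of (rels := braidRels m) i)⁻¹) r = 1 := by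
  rintro r (⟨i, j, hij, rfl⟩ | ⟨i, j, hij, rfl⟩)
  · simp only [map_mul, map_inv, FreeGroup.lift_apply_of]
    have hb := braid_rel1 hij
    set x := PresentedGroup.of (rels := braidRels m) i
    set y := PresentedGroup.of (rels := braidRels m) j
    rw [show x⁻¹ * y⁻¹ * x⁻¹ = (x * y * x)⁻¹ by group, hb]
    group
  · simp only [map_mul, map_inv, FreeGroup.lift_apply_of]
    have hb := braid_rel2 hij
    set x := PresentedGroup.of (rels := braidRels m) i
    set y := PresentedGroup.of (rels := braidRels m) j
    rw [show x⁻¹ * y⁻¹ = (y * x)⁻¹ by group, ← hb]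
    group

def tau (n : ℕ) : BraidGroup n →* BraidGroup n :=
  PresentedGroup.toGroup (braid_inv_rels (n - 1))

lemma tau_of (n : ℕ) (i : Fin (n - 1)) :
    tau n (PresentedGroup.of i) = (PresentedGroup.of (rels := braidRels (n-1)) i)⁻¹ :=
  PresentedGroup.toGroup.of _

lemma tau_tau (n : ℕ) (g : BraidGroup n) : tau n (tau n g) = g := by
  have : (tau n).comp (tau n) = MonoidHom.id (BraidGroup n) := by
    apply PresentedGroup.ext
    intro i
    simp [tau_of, map_inv]
  exact DFunLike.congr_fun this g


end Stmt3Aux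

namespace Stmt3Aux

variable (n : ℕ)

/-- Canonical monoid hom from the braid group to the cubic Hecke algebra. -/
def iota : BraidGroup n →* CubicHecke n :=
  (RingQuot.mkRingHom (cubicRel n)).toMonoidHom.comp (MonoidAlgebra.of GenR (BraidGroup n))

def fH : GenR →+* CubicHecke n := (algebraMap GenR (CubicHecke n)).comp sigma

def gH : BraidGroup n →* CubicHecke n := (iota n).comp (tau n)

lemma fH_apply (r : GenR) : fH n r = algebraMap GenR (CubicHecke n) (sigma r) := rfl

def phiMA : MonoidAlgebra GenR (BraidGroup n) →+* CubicHecke n :=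
  MonoidAlgebra.liftNCRingHom (fH n) (gH n)
    (fun r x => Algebra.commutes (sigma r) (gH n x))

lemma phiMA_single (g : BraidGroup n) (r : GenR) :
    phiMA n (MonoidAlgebra.single g r) =
      algebraMap GenR (CubicHecke n) (sigma r) * gH n g :=
  MonoidAlgebra.liftNC_single _ _ _ _

lemma phiMA_of (g : BraidGroup n) :
    phiMA n (MonoidAlgebra.of GenR (BraidGroup n) g) = gH n g := by
  rw [MonoidAlgebra.of_apply, phiMA_single, map_one, map_one, one_mul]

lemma phiMA_algebraMap (r : GenR) :
    phiMA n (algebraMap GenR (MonoidAlgebra GenR (BraidGroup n)) r) =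
      algebraMap GenR (CubicHecke n) (sigma r) := by
  have : algebraMap GenR (MonoidAlgebra GenR (BraidGroup n)) r =
      MonoidAlgebra.single 1 r := by
    rw [MonoidAlgebra.coe_algebraMap]
    simp
  rw [this, phiMA_single, map_one, mul_one]

lemma mk_eq (x : MonoidAlgebra GenR (BraidGroup n)) :
    RingQuot.mkAlgHom GenR (cubicRel n) x = RingQuot.mkRingHom (cubicRel n) x := by
  rw [← RingQuot.mkAlgHom_coe GenR (cubicRel n)]
  rfl

lemma algebraMap_CH (r : GenR) :
    algebraMap GenR (CubicHecke n) r =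
      RingQuot.mkRingHom (cubicRel n) (algebraMap GenR (MonoidAlgebra GenR (BraidGroup n)) r) := by
  rw [← mk_eq, AlgHom.commutes]

lemma sH_mul_sHinv (i : Fin (n - 1)) : sH n i * sHinv n i = 1 := by
  rw [sH, sHinv, ← map_mul, sGen, sGenInv, ← map_mul, mul_inv_cancel, map_one, map_one]

lemma sHinv_mul_sH (i : Fin (n - 1)) : sHinv n i * sH n i = 1 := by
  rw [sH, sHinv, ← map_mul, sGen, sGenInv, ← map_mul, inv_mul_cancel, map_one, map_one]

lemma cubic (i : Fin (n - 1)) :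
    sH n i ^ 3 = algebraMap GenR (CubicHecke n) aR * sH n i ^ 2 +
      algebraMap GenR (CubicHecke n) bR * sH n i + algebraMap GenR (CubicHecke n) cR := by
  have h : RingQuot.mkAlgHom GenR (cubicRel n) (sGen n i ^ 3) =
      RingQuot.mkAlgHom GenR (cubicRel n) (aR • sGen n i ^ 2 + bR • sGen n i + cR • 1) :=
    RingQuot.mkAlgHom_rel GenR ⟨i, rfl, rfl⟩
  rw [map_pow, map_add, map_add, map_smul, map_smul, map_smul, map_pow, map_one] at h
  rw [sH]
  rw [h, ← Algebra.smul_def, ← Algebra.smul_def, ← mul_one (algebraMap GenR (CubicHecke n) cR),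
    ← Algebra.smul_def]

lemma inv_cubic (i : Fin (n - 1)) :
    sHinv n i ^ 3 =
      algebraMap GenR (CubicHecke n) (-bR * cInv) * sHinv n i ^ 2 +
      algebraMap GenR (CubicHecke n) (-aR * cInv) * sHinv n i +
      algebraMap GenR (CubicHecke n) cInv := by
  have hST : sH n i * sHinv n i = 1 := sH_mul_sHinv n i
  have h2 : sH n i ^ 2 * sHinv n i ^ 2 = 1 := by
    rw [pow_two, pow_two, mul_assoc, ← mul_assoc (sH n i) (sHinv n i), hST, one_mul, hST]
  have h3 : sH n i ^ 3 * sHinv n i ^ 3 = 1 := by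
    rw [pow_succ (sH n i) 2, pow_succ' (sHinv n i) 2, mul_assoc,
      ← mul_assoc (sH n i) (sHinv n i), hST, one_mul, h2]
  have h21 : sH n i ^ 2 * sHinv n i ^ 3 = sHinv n i := by
    rw [pow_succ (sHinv n i) 2, ← mul_assoc, h2, one_mul]
  have h11 : sH n i * sHinv n i ^ 3 = sHinv n i ^ 2 := by
    rw [pow_succ' (sHinv n i) 2, ← mul_assoc, hST, one_mul]
  have h1 : (1 : CubicHecke n) =
      algebraMap GenR (CubicHecke n) aR * sHinv n i +
        algebraMap GenR (CubicHecke n) bR * sHinv n i ^ 2 +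
        algebraMap GenR (CubicHecke n) cR * sHinv n i ^ 3 := by
    calc (1 : CubicHecke n) = sH n i ^ 3 * sHinv n i ^ 3 := h3.symm
      _ = (algebraMap GenR (CubicHecke n) aR * sH n i ^ 2 +
            algebraMap GenR (CubicHecke n) bR * sH n i +
            algebraMap GenR (CubicHecke n) cR) * sHinv n i ^ 3 := by rw [← cubic n i]
      _ = algebraMap GenR (CubicHecke n) aR * sHinv n i +
            algebraMap GenR (CubicHecke n) bR * sHinv n i ^ 2 +
            algebraMap GenR (CubicHecke n) cR * sHinv n i ^ 3 := by
          rw [add_mul, add_mul, mul_assoc, mul_assoc, h21, h11]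
  have key : algebraMap GenR (CubicHecke n) cInv =
      algebraMap GenR (CubicHecke n) (aR * cInv) * sHinv n i +
        algebraMap GenR (CubicHecke n) (bR * cInv) * sHinv n i ^ 2 + sHinv n i ^ 3 := by
    calc algebraMap GenR (CubicHecke n) cInv
        = algebraMap GenR (CubicHecke n) cInv * 1 := (mul_one _).symm
      _ = algebraMap GenR (CubicHecke n) cInv *
            (algebraMap GenR (CubicHecke n) aR * sHinv n i +
              algebraMap GenR (CubicHecke n) bR * sHinv n i ^ 2 +
              algebraMap GenR (CubicHecke n) cR * sHinv n i ^ 3) := by rw [← h1]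
      _ = algebraMap GenR (CubicHecke n) (aR * cInv) * sHinv n i +
            algebraMap GenR (CubicHecke n) (bR * cInv) * sHinv n i ^ 2 + sHinv n i ^ 3 := by
          rw [mul_add, mul_add, ← mul_assoc, ← mul_assoc, ← mul_assoc, ← map_mul, ← map_mul,
            ← map_mul, mul_comm cInv aR, mul_comm cInv bR, cInv_mul_cR, map_one, one_mul]
  have z1 : algebraMap GenR (CubicHecke n) (-bR * cInv) * sHinv n i ^ 2 +
      algebraMap GenR (CubicHecke n) (bR * cInv) * sHinv n i ^ 2 = 0 := by
    rw [← add_mul, ← map_add, show (-bR * cInv + bR * cInv : GenR) = 0 by ring, map_zero,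
      zero_mul]
  have z2 : algebraMap GenR (CubicHecke n) (-aR * cInv) * sHinv n i +
      algebraMap GenR (CubicHecke n) (aR * cInv) * sHinv n i = 0 := by
    rw [← add_mul, ← map_add, show (-aR * cInv + aR * cInv : GenR) = 0 by ring, map_zero,
      zero_mul]
  rw [key]
  calc sHinv n i ^ 3 = 0 + 0 + sHinv n i ^ 3 := by rw [zero_add, zero_add]
    _ = (algebraMap GenR (CubicHecke n) (-bR * cInv) * sHinv n i ^ 2 +
          algebraMap GenR (CubicHecke n) (bR * cInv) * sHinv n i ^ 2) +
        (algebraMap GenR (CubicHecke n) (-aR * cInv) * sHinv n i +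
          algebraMap GenR (CubicHecke n) (aR * cInv) * sHinv n i) + sHinv n i ^ 3 := by
        rw [z1, z2]
    _ = algebraMap GenR (CubicHecke n) (-bR * cInv) * sHinv n i ^ 2 +
          algebraMap GenR (CubicHecke n) (-aR * cInv) * sHinv n i +
          (algebraMap GenR (CubicHecke n) (aR * cInv) * sHinv n i +
            algebraMap GenR (CubicHecke n) (bR * cInv) * sHinv n i ^ 2 + sHinv n i ^ 3) := by
        abel

lemma hresp : ∀ ⦃x y⦄, cubicRel n x y → phiMA n x = phiMA n y := by
  rintro x y ⟨i, rfl, rfl⟩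
  have hgen : phiMA n (sGen n i) = sHinv n i := by
    rw [sGen, phiMA_of]
    show iota n (tau n (PresentedGroup.of i)) = sHinv n i
    rw [tau_of, sHinv, mk_eq, sGenInv]
    rfl
  rw [map_pow, hgen]
  rw [Algebra.smul_def, Algebra.smul_def, Algebra.smul_def, mul_one, map_add, map_add,
    map_mul, map_mul, phiMA_algebraMap, phiMA_algebraMap, phiMA_algebraMap,
    map_pow, hgen, sigma_aR, sigma_bR, sigma_cR]
  exact inv_cubic n i

def Phi : CubicHecke n →+* CubicHecke n :=
  RingQuot.lift ⟨phiMA n, hresp n⟩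

lemma Phi_mk (x : MonoidAlgebra GenR (BraidGroup n)) :
    Phi n (RingQuot.mkRingHom (cubicRel n) x) = phiMA n x :=
  RingQuot.lift_mkRingHom_apply _ _ _

lemma Phi_algebraMap (r : GenR) :
    Phi n (algebraMap GenR (CubicHecke n) r) = algebraMap GenR (CubicHecke n) (sigma r) := by
  rw [algebraMap_CH, Phi_mk, phiMA_algebraMap]

lemma gH_eq (g : BraidGroup n) :
    gH n g = RingQuot.mkRingHom (cubicRel n) (MonoidAlgebra.of GenR (BraidGroup n) (tau n g)) :=
  rfl

lemma Phi_Phi : (Phi n).comp (Phi n) = RingHom.id (CubicHecke n) := by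
  apply RingQuot.ringQuot_ext
  apply MonoidAlgebra.ringHom_ext <;> intro w <;>
    simp only [RingHom.comp_apply, RingHom.id_apply]
  · -- single 1 w, w : GenR
    have h1 : RingQuot.mkRingHom (cubicRel n) (MonoidAlgebra.single 1 w) =
        algebraMap GenR (CubicHecke n) w := by
      have e : algebraMap GenR (MonoidAlgebra GenR (BraidGroup n)) w =
          MonoidAlgebra.single 1 w := by
        rw [MonoidAlgebra.coe_algebraMap]; simp
      rw [algebraMap_CH, e]
    rw [h1, Phi_algebraMap, Phi_algebraMap]
    have hs := DFunLike.congr_fun sigma_sigma w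
    simp only [RingHom.comp_apply, RingHom.id_apply] at hs
    rw [hs]
  · -- single w 1, w : BraidGroup n
    have h1 : ∀ g : BraidGroup n, (MonoidAlgebra.single g (1:GenR)) =
        MonoidAlgebra.of GenR (BraidGroup n) g := fun g => rfl
    rw [h1, Phi_mk, phiMA_of, gH_eq, Phi_mk, phiMA_of, gH_eq, tau_tau]

end Stmt3Aux

/-- there is a ring (ℤ-algebra) automorphism `Φ` of `A_n` with
`Φ(s_i) = s_i⁻¹`, semilinear over `a ↦ -b c⁻¹`, `b ↦ -a c⁻¹`, `c ↦ c⁻¹`. -/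
theorem stmt3 (n : ℕ) :
    ∃ Φ : CubicHecke n ≃+* CubicHecke n,
      (∀ i : Fin (n - 1), Φ (sH n i) = sHinv n i) ∧
      Φ (algebraMap GenR (CubicHecke n) aR) =
        algebraMap GenR (CubicHecke n) (-bR * cInv) ∧
      Φ (algebraMap GenR (CubicHecke n) bR) =
        algebraMap GenR (CubicHecke n) (-aR * cInv) ∧
      Φ (algebraMap GenR (CubicHecke n) cR) =
        algebraMap GenR (CubicHecke n) cInv := by
  refine ⟨RingEquiv.ofRingHom (Stmt3Aux.Phi n) (Stmt3Aux.Phi n)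
    (Stmt3Aux.Phi_Phi n) (Stmt3Aux.Phi_Phi n), ?_, ?_, ?_, ?_⟩
  · intro i
    show Stmt3Aux.Phi n (sH n i) = sHinv n i
    rw [sH, Stmt3Aux.mk_eq, sGen, Stmt3Aux.Phi_mk, Stmt3Aux.phiMA_of, Stmt3Aux.gH_eq,
      Stmt3Aux.tau_of, sHinv, Stmt3Aux.mk_eq, sGenInv]
  · show Stmt3Aux.Phi n _ = _
    rw [Stmt3Aux.Phi_algebraMap, Stmt3Aux.sigma_aR]
  · show Stmt3Aux.Phi n _ = _
    rw [Stmt3Aux.Phi_algebraMap, Stmt3Aux.sigma_bR]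
  · show Stmt3Aux.Phi n _ = _
    rw [Stmt3Aux.Phi_algebraMap, Stmt3Aux.sigma_cR]

end
end

section
/- In the cubic Hecke algebra A_n, for each i ≤ n-2 one has the inclusion (s_{i+1}⁻¹ s_i s_{i+1}⁻¹) s_i⁻¹ ∈ s_i⁻¹ (s_{i+1}⁻¹ s_i s_{i+1}⁻¹) + u_i u_{i+1} u_i, where u_j denotes the R-subalgebra of A_n generated by s_j. -/
-- helper: express s in terms of t, and t in the subalgebra
section
variable {R A : Type*} [CommRing R] [Ring A] [Algebra R A]

lemma braid_t (u v su sv : A) (hb : su * sv * su = sv * su * sv)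
    (hu1 : su * u = 1) (hu2 : u * su = 1) (hv1 : sv * v = 1) (hv2 : v * sv = 1) :
    u * v * u = v * u * v := by
  have e1 : (u * v * u) * (su * sv * su) = 1 := by
    calc (u * v * u) * (su * sv * su) = u * v * ((u * su) * (sv * su)) := by noncomm_ring
    _ = u * ((v * sv) * su) := by rw [hu2, one_mul, mul_assoc, mul_assoc]
    _ = 1 := by rw [hv2, one_mul, hu2]
  have e2 : (su * sv * su) * (v * u * v) = 1 := by
    rw [hb]
    calc (sv * su * sv) * (v * u * v) = sv * su * ((sv * v) * (u * v)) := by noncomm_ring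
    _ = sv * ((su * u) * v) := by rw [hv1, one_mul, mul_assoc, mul_assoc]
    _ = 1 := by rw [hu1, one_mul, hv1]
  calc u * v * u = (u * v * u) * ((su * sv * su) * (v * u * v)) := by rw [e2, mul_one]
    _ = ((u * v * u) * (su * sv * su)) * (v * u * v) := by noncomm_ring
    _ = v * u * v := by rw [e1, one_mul]

end

section
variable {R A : Type*} [CommRing R] [Ring A] [Algebra R A]

lemma key_id (a b cR : R) (u v : A) (hb : u * v * u = v * u * v) :
    (v * (a • 1 + b • u + cR • (u * u)) * v) * u
      - u * (v * (a • 1 + b • u + cR • (u * u)) * v)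
    = a • (v * v * u - u * (v * v)) + b • (u * v * (u * u) - u * u * (v * u)) := by
  have h1 : v * u * v * u = u * v * (u * u) := by rw [← hb]; noncomm_ring
  have h2 : u * (v * u * v) = u * u * (v * u) := by rw [← hb]; noncomm_ring
  have h3 : v * (u * u) * v * u = u * (v * (u * u) * v) := by
    calc v * (u * u) * v * u = v * u * (u * v * u) := by noncomm_ring
      _ = v * u * (v * u * v) := by rw [hb]
      _ = (v * u * v) * (u * v) := by noncomm_ring
      _ = (u * v * u) * (u * v) := by rw [hb]
      _ = u * (v * (u * u) * v) := by noncomm_ring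
  simp only [mul_add, add_mul, smul_mul_assoc, mul_smul_comm, mul_one, one_mul, smul_sub]
  rw [h1, h2, h3]
  abel

end

section
variable {R A : Type*} [CommRing R] [Ring A] [Algebra R A]

lemma t_props (a b : R) (c : Rˣ) (x y : A)
    (hc : x ^ 3 = a • x ^ 2 + b • x + (c : R) • (1 : A))
    (h1 : x * y = 1) (h2 : y * x = 1) :
    x = a • 1 + b • y + (c : R) • (y * y) ∧ y ∈ Algebra.adjoin R ({x} : Set A) := by
  have hx2y : x ^ 2 * y = x := by rw [sq, mul_assoc, h1, mul_one]
  have hx3y : x ^ 3 * y = x ^ 2 := by rw [pow_succ, mul_assoc, h1, mul_one]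
  have eq1 : x ^ 2 = a • x + b • (1 : A) + (c : R) • y := by
    have h := congrArg (fun z => z * y) hc
    simp only [add_mul, smul_mul_assoc, one_mul] at h
    rw [hx3y, hx2y, h1] at h
    exact h
  have eq2 : x = a • 1 + b • y + (c : R) • (y * y) := by
    have h := congrArg (fun z => z * y) eq1
    simp only [add_mul, smul_mul_assoc, one_mul] at h
    rw [hx2y, h1] at h
    exact h
  refine ⟨eq2, ?_⟩
  have hcy : (c : R) • y = x ^ 2 - a • x - b • (1 : A) := by rw [eq1]; abel
  have hy : y = ((c⁻¹ : Rˣ) : R) • (x ^ 2 - a • x - b • (1 : A)) := by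
    rw [← hcy, smul_smul, Units.inv_mul, one_smul]
  rw [hy]
  have hx : x ∈ Algebra.adjoin R ({x} : Set A) := Algebra.subset_adjoin rfl
  exact Subalgebra.smul_mem _ (sub_mem (sub_mem (pow_mem hx 2)
    (Subalgebra.smul_mem _ hx a)) (Subalgebra.smul_mem _ (one_mem _) b)) _

end

/-- In the cubic Hecke algebra `A_n`, for each `i ≤ n-2` one has
`(s_{i+1}⁻¹ s_i s_{i+1}⁻¹) s_i⁻¹ ∈ s_i⁻¹ (s_{i+1}⁻¹ s_i s_{i+1}⁻¹) + u_i u_{i+1} u_i`,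
where `u_j` is the `R`-subalgebra generated by `s_j`.  The inverses `s_j⁻¹` are
denoted `t j`. -/
theorem stmt4 (R A : Type*) [CommRing R] [Ring A] [Algebra R A]
    (a b : R) (c : Rˣ) (n : ℕ) (s t : ℕ → A)
    (hbraid : ∀ i, 1 ≤ i → i + 1 ≤ n - 1 →
      s i * s (i + 1) * s i = s (i + 1) * s i * s (i + 1))
    (hcomm : ∀ i j, 1 ≤ i → j ≤ n - 1 → i + 2 ≤ j → s i * s j = s j * s i)
    (hcubic : ∀ i, 1 ≤ i → i ≤ n - 1 →
      s i ^ 3 = a • s i ^ 2 + b • s i + (c : R) • (1 : A))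
    (hinv : ∀ i, 1 ≤ i → i ≤ n - 1 → s i * t i = 1 ∧ t i * s i = 1) :
    ∀ i, 1 ≤ i → i + 1 ≤ n - 1 →
      (t (i + 1) * s i * t (i + 1)) * t i - t i * (t (i + 1) * s i * t (i + 1)) ∈
        Subalgebra.toSubmodule (Algebra.adjoin R ({s i} : Set A)) *
        Subalgebra.toSubmodule (Algebra.adjoin R ({s (i + 1)} : Set A)) *
        Subalgebra.toSubmodule (Algebra.adjoin R ({s i} : Set A)) := by
  intro i hi hin1
  have hi' : i ≤ n - 1 := by omega
  have hi1 : 1 ≤ i + 1 := by omega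
  obtain ⟨hsu1, hsu2⟩ := hinv i hi hi'
  obtain ⟨hsv1, hsv2⟩ := hinv (i + 1) hi1 hin1
  obtain ⟨hsi_eq, hu_mem⟩ := t_props a b c (s i) (t i) (hcubic i hi hi') hsu1 hsu2
  obtain ⟨-, hv_mem⟩ :=
    t_props a b c (s (i + 1)) (t (i + 1)) (hcubic (i + 1) hi1 hin1) hsv1 hsv2
  have hbt : t i * t (i + 1) * t i = t (i + 1) * t i * t (i + 1) :=
    braid_t (t i) (t (i + 1)) (s i) (s (i + 1)) (hbraid i hi hin1) hsu1 hsu2 hsv1 hsv2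
  set u := t i
  set v := t (i + 1)
  have heq : (v * s i * v) * u - u * (v * s i * v)
      = a • (v * v * u - u * (v * v)) + b • (u * v * (u * u) - u * u * (v * u)) := by
    rw [hsi_eq]; exact key_id a b (c : R) u v hbt
  rw [heq]
  set P := Subalgebra.toSubmodule (Algebra.adjoin R ({s i} : Set A))
  set Q := Subalgebra.toSubmodule (Algebra.adjoin R ({s (i + 1)} : Set A))
  have hPu : u ∈ P := hu_mem
  have hQv : v ∈ Q := hv_mem
  have hP1 : (1 : A) ∈ P := one_mem (Algebra.adjoin R ({s i} : Set A))
  have hQvv : v * v ∈ Q := (Subalgebra.mem_toSubmodule _).mpr (mul_mem hv_mem hv_mem)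
  have hPuu : u * u ∈ P := (Subalgebra.mem_toSubmodule _).mpr (mul_mem hu_mem hu_mem)
  have m1 : v * v * u ∈ P * Q * P := by
    have := Submodule.mul_mem_mul (Submodule.mul_mem_mul hP1 hQvv) hPu
    simpa using this
  have m2 : u * (v * v) ∈ P * Q * P := by
    have := Submodule.mul_mem_mul (Submodule.mul_mem_mul hPu hQvv) hP1
    simpa using this
  have m3 : u * v * (u * u) ∈ P * Q * P :=
    Submodule.mul_mem_mul (Submodule.mul_mem_mul hPu hQv) hPuu
  have m4 : u * u * (v * u) ∈ P * Q * P := by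
    have := Submodule.mul_mem_mul (Submodule.mul_mem_mul hPuu hQv) hPu
    simpa [mul_assoc] using this
  exact add_mem (Submodule.smul_mem _ _ (sub_mem m1 m2))
    (Submodule.smul_mem _ _ (sub_mem m3 m4))
end

section
/- In the cubic Hecke algebra A_n, for each i ≤ n-2 one has s_{i+1}⁻¹ s_i s_{i+1}⁻¹ ∈ c⁻¹ (s_{i+1} s_i⁻¹ s_{i+1}) s_i + u_i u_{i+1} u_i. -/
/-- From the cubic relation and right-invertibility we get the standard formula
for the inverse in a cubic Hecke algebra. -/
lemma stmt5_inv_formula {R A : Type*} [CommRing R] [Ring A] [Algebra R A]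
    (a b : R) (c : Rˣ) (x y : A)
    (hc : x ^ 3 = a • x ^ 2 + b • x + (c : R) • (1 : A)) (h : x * y = 1) :
    y = (↑c⁻¹ : R) • (x * x - a • x - b • (1 : A)) := by
  have h2 : x ^ 3 * y = x * x := by
    calc x ^ 3 * y = x * (x * (x * y)) := by noncomm_ring
      _ = x * x := by rw [h, mul_one]
  have h3 : x ^ 3 * y = a • x + b • (1 : A) + (c : R) • y := by
    calc x ^ 3 * y = (a • x ^ 2 + b • x + (c : R) • (1 : A)) * y := by rw [hc]
      _ = a • (x * (x * y)) + b • (x * y) + (c : R) • (1 * y) := by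
          simp only [add_mul, smul_mul_assoc, pow_two]; rw [mul_assoc]
      _ = a • x + b • (1 : A) + (c : R) • y := by rw [h, mul_one, one_mul]
  have h4 : x * x = a • x + b • (1 : A) + (c : R) • y := h2.symm.trans h3
  have h5 : (c : R) • y = x * x - a • x - b • (1 : A) := by rw [h4]; module
  calc y = (↑c⁻¹ * ↑c : R) • y := by rw [Units.inv_mul, one_smul]
    _ = (↑c⁻¹ : R) • ((c : R) • y) := by rw [smul_smul]
    _ = (↑c⁻¹ : R) • (x * x - a • x - b • (1 : A)) := by rw [h5]

/-- In the cubic Hecke algebra `A_n`, for each `i ≤ n-2` one has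
`s_{i+1}⁻¹ s_i s_{i+1}⁻¹ ∈ c⁻¹ (s_{i+1} s_i⁻¹ s_{i+1}) s_i + u_i u_{i+1} u_i`.
The inverses `s_j⁻¹` are denoted `t j`. -/
theorem stmt5 (R A : Type*) [CommRing R] [Ring A] [Algebra R A]
    (a b : R) (c : Rˣ) (n : ℕ) (s t : ℕ → A)
    (hbraid : ∀ i, 1 ≤ i → i + 1 ≤ n - 1 →
      s i * s (i + 1) * s i = s (i + 1) * s i * s (i + 1))
    (hcomm : ∀ i j, 1 ≤ i → j ≤ n - 1 → i + 2 ≤ j → s i * s j = s j * s i)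
    (hcubic : ∀ i, 1 ≤ i → i ≤ n - 1 →
      s i ^ 3 = a • s i ^ 2 + b • s i + (c : R) • (1 : A))
    (hinv : ∀ i, 1 ≤ i → i ≤ n - 1 → s i * t i = 1 ∧ t i * s i = 1) :
    ∀ i, 1 ≤ i → i + 1 ≤ n - 1 →
      t (i + 1) * s i * t (i + 1) -
        (↑c⁻¹ : R) • (s (i + 1) * t i * s (i + 1) * s i) ∈
        Subalgebra.toSubmodule (Algebra.adjoin R ({s i} : Set A)) *
        Subalgebra.toSubmodule (Algebra.adjoin R ({s (i + 1)} : Set A)) *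
        Subalgebra.toSubmodule (Algebra.adjoin R ({s i} : Set A)) := by
  intro i hi hi1
  have hile : i ≤ n - 1 := le_trans (Nat.le_succ i) hi1
  have hi1ge : 1 ≤ i + 1 := Nat.le_add_left 1 i
  set x := s i with hxdef
  set y := s (i + 1) with hydef
  -- braid relation
  have hb : x * y * x = y * x * y := hbraid i hi hi1
  -- formulas for the inverses
  have hti : t i = (↑c⁻¹ : R) • (x * x - a • x - b • (1 : A)) :=
    stmt5_inv_formula a b c x (t i) (hcubic i hi hile) (hinv i hi hile).1
  have hti1 : t (i + 1) = (↑c⁻¹ : R) • (y * y - a • y - b • (1 : A)) :=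
    stmt5_inv_formula a b c y (t (i + 1)) (hcubic (i + 1) hi1ge hi1)
      (hinv (i + 1) hi1ge hi1).1
  -- braid consequences (fully right-associated forms)
  have hb2 : y * (x * y) = x * (y * x) := by
    calc y * (x * y) = y * x * y := by noncomm_ring
      _ = x * y * x := by rw [← hb]
      _ = x * (y * x) := by noncomm_ring
  have h3' : y * (y * (x * y)) = x * (y * (x * x)) := by
    calc y * (y * (x * y)) = y * (y * x * y) := by noncomm_ring
      _ = y * (x * y * x) := by rw [← hb]
      _ = (y * x * y) * x := by noncomm_ring
      _ = (x * y * x) * x := by rw [← hb]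
      _ = x * (y * (x * x)) := by noncomm_ring
  have h4' : y * (x * (y * y)) = x * (x * (y * x)) := by
    calc y * (x * (y * y)) = (y * x * y) * y := by noncomm_ring
      _ = (x * y * x) * y := by rw [← hb]
      _ = x * (y * x * y) := by noncomm_ring
      _ = x * (x * y * x) := by rw [← hb]
      _ = x * (x * (y * x)) := by noncomm_ring
  have h5' : y * (x * (y * x)) = x * (y * (x * x)) := by
    calc y * (x * (y * x)) = (y * x * y) * x := by noncomm_ring
      _ = (x * y * x) * x := by rw [← hb]
      _ = x * (y * (x * x)) := by noncomm_ring
  have h2' : y * (y * (x * (y * y))) = y * (x * (x * (y * x))) := by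
    calc y * (y * (x * (y * y))) = y * ((y * x * y) * y) := by noncomm_ring
      _ = y * ((x * y * x) * y) := by rw [← hb]
      _ = (y * x) * (y * x * y) := by noncomm_ring
      _ = (y * x) * (x * y * x) := by rw [← hb]
      _ = y * (x * (x * (y * x))) := by noncomm_ring
  -- the key algebraic identity
  have key : t (i + 1) * x * t (i + 1) - (↑c⁻¹ : R) • (y * t i * y * x) =
      ((↑c⁻¹ : R) * (↑c⁻¹ : R)) •
        ((b * b) • x - a • (x * (x * (y * x))) + (a * b) • (x * y)
          + (a * a) • (x * (y * x)) - b • (x * (y * y)) + (a * b) • (y * x)) := by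
    rw [hti, hti1]
    simp only [smul_sub, smul_smul, sub_mul, mul_sub, smul_mul_assoc, mul_smul_comm,
      mul_one, one_mul, mul_assoc]
    rw [h2', h3', h4', h5', hb2]
    module
  rw [key]
  -- now check membership of each monomial
  set M1 := Subalgebra.toSubmodule (Algebra.adjoin R ({x} : Set A)) with hM1
  set M2 := Subalgebra.toSubmodule (Algebra.adjoin R ({y} : Set A)) with hM2
  have hx : x ∈ M1 := Algebra.self_mem_adjoin_singleton R x
  have hy : y ∈ M2 := Algebra.self_mem_adjoin_singleton R y
  have h1x : (1 : A) ∈ M1 := (Subalgebra.mem_toSubmodule _).mpr (one_mem _)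
  have h1y : (1 : A) ∈ M2 := (Subalgebra.mem_toSubmodule _).mpr (one_mem _)
  have hxx : x * x ∈ M1 := (Subalgebra.mem_toSubmodule _).mpr
    (mul_mem ((Subalgebra.mem_toSubmodule _).mp hx) ((Subalgebra.mem_toSubmodule _).mp hx))
  have hyy : y * y ∈ M2 := (Subalgebra.mem_toSubmodule _).mpr
    (mul_mem ((Subalgebra.mem_toSubmodule _).mp hy) ((Subalgebra.mem_toSubmodule _).mp hy))
  have m1 : x ∈ M1 * M2 * M1 := by
    have := Submodule.mul_mem_mul (Submodule.mul_mem_mul hx h1y) h1x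
    rwa [mul_one, mul_one] at this
  have m2 : x * (x * (y * x)) ∈ M1 * M2 * M1 := by
    have := Submodule.mul_mem_mul (Submodule.mul_mem_mul hxx hy) hx
    rwa [show x * x * y * x = x * (x * (y * x)) by noncomm_ring] at this
  have m3 : x * y ∈ M1 * M2 * M1 := by
    have := Submodule.mul_mem_mul (Submodule.mul_mem_mul hx hy) h1x
    rwa [mul_one] at this
  have m4 : x * (y * x) ∈ M1 * M2 * M1 := by
    have := Submodule.mul_mem_mul (Submodule.mul_mem_mul hx hy) hx
    rwa [show x * y * x = x * (y * x) by noncomm_ring] at this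
  have m5 : x * (y * y) ∈ M1 * M2 * M1 := by
    have := Submodule.mul_mem_mul (Submodule.mul_mem_mul hx hyy) h1x
    rwa [mul_one] at this
  have m6 : y * x ∈ M1 * M2 * M1 := by
    have := Submodule.mul_mem_mul (Submodule.mul_mem_mul h1x hy) hx
    rwa [one_mul] at this
  exact Submodule.smul_mem _ _
    (add_mem (sub_mem (add_mem (add_mem (sub_mem
      (Submodule.smul_mem _ _ m1) (Submodule.smul_mem _ _ m2))
      (Submodule.smul_mem _ _ m3)) (Submodule.smul_mem _ _ m4))
      (Submodule.smul_mem _ _ m5)) (Submodule.smul_mem _ _ m6))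
end

section
/- In the cubic Hecke algebra A_n, for each i ≤ n-2 and α ∈ {-1,1}, the element s_{i+1}^α s_i^α s_{i+1}^{-α} lies in the subspace u_i u_{i+1} u_i, where u_j is the R-subalgebra generated by s_j. -/
section Aux
variable {R A : Type*} [CommRing R] [Ring A] [Algebra R A]

/-- From the cubic relation and a right inverse, express the inverse scaled by `c`. -/
lemma inv_expr (a b : R) (c : Rˣ) (y y' : A)
    (hc : y ^ 3 = a • y ^ 2 + b • y + (c : R) • (1 : A))
    (hi : y * y' = 1) :
    (c : R) • y' = y * y - a • y - b • (1 : A) := by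
  have hc1 : (c : R) • (1 : A) = y ^ 3 - a • y ^ 2 - b • y := by
    rw [hc]; abel
  have : ((c : R) • (1 : A)) * y' = (y ^ 3 - a • y ^ 2 - b • y) * y' := by rw [hc1]
  calc (c : R) • y' = ((c : R) • (1 : A)) * y' := by rw [smul_mul_assoc, one_mul]
    _ = (y ^ 3 - a • y ^ 2 - b • y) * y' := by rw [hc1]
    _ = y * y * (y * y') - a • (y * (y * y')) - b • (y * y') := by
        simp only [sub_mul, smul_mul_assoc, pow_succ, pow_two, pow_zero, one_mul, mul_assoc]
    _ = y * y - a • y - b • (1 : A) := by rw [hi, mul_one, mul_one]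

/-- key membership lemma: `y * x * y'` lies in any submodule containing the three monomials. -/
lemma key_mem (a b : R) (c : Rˣ) (x y y' : A) (N : Submodule R A)
    (hb : x * y * x = y * x * y)
    (hc : y ^ 3 = a • y ^ 2 + b • y + (c : R) • (1 : A))
    (hi : y * y' = 1)
    (h1 : x * x * y * x ∈ N) (h2 : x * y * x ∈ N) (h3 : y * x ∈ N) :
    y * x * y' ∈ N := by
  have hcy : (c : R) • y' = y * y - a • y - b • (1 : A) := inv_expr a b c y y' hc hi
  have hbraid2 : y * x * (y * y) = x * x * y * x := by
    calc y * x * (y * y) = (y * x * y) * y := by noncomm_ring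
      _ = (x * y * x) * y := by rw [hb]
      _ = x * (y * x * y) := by noncomm_ring
      _ = x * (x * y * x) := by rw [hb]
      _ = x * x * y * x := by noncomm_ring
  have key_eq : (c : R) • (y * x * y') = x * x * y * x - a • (x * y * x) - b • (y * x) := by
    calc (c : R) • (y * x * y') = (y * x) * ((c : R) • y') := by
          rw [mul_smul_comm, mul_assoc]
      _ = y * x * (y * y) - a • (y * x * y) - b • (y * x) := by
          rw [hcy, mul_sub, mul_sub, mul_smul_comm, mul_smul_comm, mul_one, mul_assoc]
      _ = x * x * y * x - a • (x * y * x) - b • (y * x) := by rw [hbraid2, hb]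
  have hm : (c : R) • (y * x * y') ∈ N := by
    rw [key_eq]
    exact N.sub_mem (N.sub_mem h1 (N.smul_mem _ h2)) (N.smul_mem _ h3)
  have := N.smul_mem ((c⁻¹ : Rˣ) : R) hm
  rwa [smul_smul, Units.inv_mul, one_smul] at this

lemma mem3 (p q : Submodule R A) {u v w : A} (hu : u ∈ p) (hv : v ∈ q) (hw : w ∈ p) :
    u * v * w ∈ p * q * p :=
  Submodule.mul_mem_mul (Submodule.mul_mem_mul hu hv) hw

end Aux

/-- In the cubic Hecke algebra `A_n`, for each `i ≤ n-2` and `α ∈ {-1,1}`,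
the element `s_{i+1}^α s_i^α s_{i+1}^{-α}` lies in `u_i u_{i+1} u_i`.
The inverses `s_j⁻¹` are denoted `t j`; the two conjuncts are the cases `α = 1`
and `α = -1`. -/
theorem stmt6 (R A : Type*) [CommRing R] [Ring A] [Algebra R A]
    (a b : R) (c : Rˣ) (n : ℕ) (s t : ℕ → A)
    (hbraid : ∀ i, 1 ≤ i → i + 1 ≤ n - 1 →
      s i * s (i + 1) * s i = s (i + 1) * s i * s (i + 1))
    (hcomm : ∀ i j, 1 ≤ i → j ≤ n - 1 → i + 2 ≤ j → s i * s j = s j * s i)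
    (hcubic : ∀ i, 1 ≤ i → i ≤ n - 1 →
      s i ^ 3 = a • s i ^ 2 + b • s i + (c : R) • (1 : A))
    (hinv : ∀ i, 1 ≤ i → i ≤ n - 1 → s i * t i = 1 ∧ t i * s i = 1) :
    ∀ i, 1 ≤ i → i + 1 ≤ n - 1 →
      (s (i + 1) * s i * t (i + 1) ∈
        Subalgebra.toSubmodule (Algebra.adjoin R ({s i} : Set A)) *
        Subalgebra.toSubmodule (Algebra.adjoin R ({s (i + 1)} : Set A)) *
        Subalgebra.toSubmodule (Algebra.adjoin R ({s i} : Set A))) ∧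
      (t (i + 1) * t i * s (i + 1) ∈
        Subalgebra.toSubmodule (Algebra.adjoin R ({s i} : Set A)) *
        Subalgebra.toSubmodule (Algebra.adjoin R ({s (i + 1)} : Set A)) *
        Subalgebra.toSubmodule (Algebra.adjoin R ({s i} : Set A))) := by
  intro i hi1 hin
  have hi' : i ≤ n - 1 := le_trans (Nat.le_succ i) hin
  have hi1' : 1 ≤ i + 1 := by omega
  -- shorthands
  set x := s i
  set y := s (i + 1)
  have hb : x * y * x = y * x * y := hbraid i hi1 hin
  have hcx : x ^ 3 = a • x ^ 2 + b • x + (c : R) • (1 : A) := hcubic i hi1 hi'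
  have hcy : y ^ 3 = a • y ^ 2 + b • y + (c : R) • (1 : A) := hcubic (i + 1) hi1' hin
  have hix : x * t i = 1 ∧ t i * x = 1 := hinv i hi1 hi'
  have hiy : y * t (i + 1) = 1 ∧ t (i + 1) * y = 1 := hinv (i + 1) hi1' hin
  set p := Subalgebra.toSubmodule (Algebra.adjoin R ({x} : Set A))
  set q := Subalgebra.toSubmodule (Algebra.adjoin R ({y} : Set A))
  have hxp : x ∈ p := Algebra.self_mem_adjoin_singleton R x
  have hyq : y ∈ q := Algebra.self_mem_adjoin_singleton R y
  have hxxp : x * x ∈ p := (Subalgebra.mem_toSubmodule _).mpr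
    (mul_mem (Algebra.self_mem_adjoin_singleton R x) (Algebra.self_mem_adjoin_singleton R x))
  have hyyq : y * y ∈ q := (Subalgebra.mem_toSubmodule _).mpr
    (mul_mem (Algebra.self_mem_adjoin_singleton R y) (Algebra.self_mem_adjoin_singleton R y))
  have h1p : (1 : A) ∈ p := (Subalgebra.mem_toSubmodule _).mpr (one_mem _)
  have h1q : (1 : A) ∈ q := (Subalgebra.mem_toSubmodule _).mpr (one_mem _)
  -- t i ∈ p, t (i+1) ∈ q
  have htx : t i ∈ p := by
    have h := inv_expr a b c x (t i) hcx hix.1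
    have : t i = ((c⁻¹ : Rˣ) : R) • (x * x - a • x - b • (1 : A)) := by
      rw [← h, smul_smul, Units.inv_mul, one_smul]
    rw [this]
    exact Submodule.smul_mem _ _
      (Submodule.sub_mem _ (Submodule.sub_mem _ hxxp (Submodule.smul_mem _ _ hxp))
        (Submodule.smul_mem _ _ h1p))
  have hty : t (i + 1) ∈ q := by
    have h := inv_expr a b c y (t (i + 1)) hcy hiy.1
    have : t (i + 1) = ((c⁻¹ : Rˣ) : R) • (y * y - a • y - b • (1 : A)) := by
      rw [← h, smul_smul, Units.inv_mul, one_smul]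
    rw [this]
    exact Submodule.smul_mem _ _
      (Submodule.sub_mem _ (Submodule.sub_mem _ hyyq (Submodule.smul_mem _ _ hyq))
        (Submodule.smul_mem _ _ h1q))
  constructor
  · -- y * x * t(i+1)
    refine key_mem a b c x y (t (i + 1)) (p * q * p) hb hcy hiy.1 ?_ ?_ ?_
    · exact mem3 p q hxxp hyq hxp
    · exact mem3 p q hxp hyq hxp
    · have := mem3 p q h1p hyq hxp
      rwa [one_mul] at this
  · -- t(i+1) * t i * s(i+1) : apply key_mem with x := t i, y := t (i+1), y' := y
    -- braid for the t's
    have htb : t i * t (i + 1) * t i = t (i + 1) * t i * t (i + 1) := by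
      have hA : (t i * t (i + 1) * t i) * (x * y * x) = 1 := by
        calc (t i * t (i + 1) * t i) * (x * y * x)
            = t i * (t (i + 1) * ((t i * x) * y)) * x := by noncomm_ring
          _ = 1 := by rw [hix.2, one_mul, hiy.2, mul_one, hix.2]
      have hB : (x * y * x) * (t (i + 1) * t i * t (i + 1)) = 1 := by
        rw [hb]
        calc (y * x * y) * (t (i + 1) * t i * t (i + 1))
            = y * (x * ((y * t (i + 1)) * t i)) * t (i + 1) := by noncomm_ring
          _ = 1 := by rw [hiy.1, one_mul, hix.1, mul_one, hiy.1]
      calc t i * t (i + 1) * t i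
          = (t i * t (i + 1) * t i) * ((x * y * x) * (t (i + 1) * t i * t (i + 1))) := by
            rw [hB, mul_one]
        _ = ((t i * t (i + 1) * t i) * (x * y * x)) * (t (i + 1) * t i * t (i + 1)) :=
            (mul_assoc _ _ _).symm
        _ = t (i + 1) * t i * t (i + 1) := by rw [hA, one_mul]
    -- cubic for t (i+1)
    have htc : t (i + 1) ^ 3 = (-(b * ((c⁻¹ : Rˣ) : R))) • t (i + 1) ^ 2
        + (-(a * ((c⁻¹ : Rˣ) : R))) • t (i + 1) + ((c⁻¹ : Rˣ) : R) • (1 : A) := by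
      have h1 : (1 : A) = a • t (i + 1) + b • t (i + 1) ^ 2 + (c : R) • t (i + 1) ^ 3 := by
        have e3 : y ^ 3 * t (i + 1) ^ 3 = 1 := by
          rw [pow_succ, pow_two, pow_succ, pow_two]
          calc y * y * y * (t (i + 1) * t (i + 1) * t (i + 1))
              = y * (y * ((y * t (i + 1)) * t (i + 1))) * t (i + 1) := by noncomm_ring
            _ = 1 := by rw [hiy.1, one_mul, hiy.1, mul_one, hiy.1]
        have e2 : y ^ 2 * t (i + 1) ^ 3 = t (i + 1) := by
          rw [pow_two, pow_succ, pow_two]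
          calc y * y * (t (i + 1) * t (i + 1) * t (i + 1))
              = y * ((y * t (i + 1)) * t (i + 1)) * t (i + 1) := by noncomm_ring
            _ = t (i + 1) := by rw [hiy.1, one_mul, hiy.1, one_mul]
        have e1 : y * t (i + 1) ^ 3 = t (i + 1) ^ 2 := by
          rw [pow_succ, pow_two]
          calc y * (t (i + 1) * t (i + 1) * t (i + 1))
              = ((y * t (i + 1)) * t (i + 1)) * t (i + 1) := by noncomm_ring
            _ = t (i + 1) * t (i + 1) := by rw [hiy.1, one_mul]
        calc (1 : A) = y ^ 3 * t (i + 1) ^ 3 := e3.symm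
          _ = (a • y ^ 2 + b • y + (c : R) • (1 : A)) * t (i + 1) ^ 3 := by rw [hcy]
          _ = a • (y ^ 2 * t (i + 1) ^ 3) + b • (y * t (i + 1) ^ 3)
              + (c : R) • ((1 : A) * t (i + 1) ^ 3) := by
              rw [add_mul, add_mul, smul_mul_assoc, smul_mul_assoc, smul_mul_assoc]
          _ = a • t (i + 1) + b • t (i + 1) ^ 2 + (c : R) • t (i + 1) ^ 3 := by
              rw [e2, e1, one_mul]
      have : (c : R) • t (i + 1) ^ 3 = (1 : A) - a • t (i + 1) - b • t (i + 1) ^ 2 := by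
        rw [h1]; abel
      calc t (i + 1) ^ 3 = ((c⁻¹ : Rˣ) : R) • ((c : R) • t (i + 1) ^ 3) := by
            rw [smul_smul, Units.inv_mul, one_smul]
        _ = ((c⁻¹ : Rˣ) : R) • ((1 : A) - a • t (i + 1) - b • t (i + 1) ^ 2) := by rw [this]
        _ = (-(b * ((c⁻¹ : Rˣ) : R))) • t (i + 1) ^ 2
            + (-(a * ((c⁻¹ : Rˣ) : R))) • t (i + 1) + ((c⁻¹ : Rˣ) : R) • (1 : A) := by
            rw [smul_sub, smul_sub, smul_smul, smul_smul]
            rw [neg_smul, neg_smul, mul_comm b, mul_comm a]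
            abel
    have htxx : t i * t i ∈ p := by
      have := htx
      rw [Subalgebra.mem_toSubmodule] at this ⊢
      exact mul_mem this this
    refine key_mem (-(b * ((c⁻¹ : Rˣ) : R))) (-(a * ((c⁻¹ : Rˣ) : R))) c⁻¹
      (t i) (t (i + 1)) y (p * q * p) htb htc hiy.2 ?_ ?_ ?_
    · exact mem3 p q htxx hty htx
    · exact mem3 p q htx hty htx
    · have := mem3 p q h1p hty htx
      rwa [one_mul] at this
end

section
/- The cubic Hecke algebra A_3 satisfies A_3 = A_2 + A_2 s_2 A_2 + A_2 s_2⁻¹ A_2 + A_2 s_2⁻¹ s_1 s_2⁻¹ A_2, where A_2 is the subalgebra generated by s_1. -/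
/-- The cubic Hecke algebra `A_3` satisfies
`A_3 = A_2 + A_2 s_2 A_2 + A_2 s_2⁻¹ A_2 + A_2 s_2⁻¹ s_1 s_2⁻¹ A_2`,
where `A_2` is the subalgebra generated by `s_1`.  Here `A` is any `R`-algebra
generated by `s1, s2` subject to the braid and cubic relations (which is exactly
`A_3` in the generic case); `t1, t2` denote the inverses of `s1, s2`. -/
theorem stmt7 (R A : Type*) [CommRing R] [Ring A] [Algebra R A]
    (a b : R) (c : Rˣ) (s1 s2 t1 t2 : A)
    (hbraid : s1 * s2 * s1 = s2 * s1 * s2)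
    (hc1 : s1 ^ 3 = a • s1 ^ 2 + b • s1 + (c : R) • (1 : A))
    (hc2 : s2 ^ 3 = a • s2 ^ 2 + b • s2 + (c : R) • (1 : A))
    (h1 : s1 * t1 = 1) (h1' : t1 * s1 = 1)
    (h2 : s2 * t2 = 1) (h2' : t2 * s2 = 1)
    (hgen : Algebra.adjoin R ({s1, s2} : Set A) = ⊤) :
    (⊤ : Submodule R A) =
      Subalgebra.toSubmodule (Algebra.adjoin R ({s1} : Set A)) ⊔
      Subalgebra.toSubmodule (Algebra.adjoin R ({s1} : Set A)) *
        Submodule.span R {s2} *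
        Subalgebra.toSubmodule (Algebra.adjoin R ({s1} : Set A)) ⊔
      Subalgebra.toSubmodule (Algebra.adjoin R ({s1} : Set A)) *
        Submodule.span R {t2} *
        Subalgebra.toSubmodule (Algebra.adjoin R ({s1} : Set A)) ⊔
      Subalgebra.toSubmodule (Algebra.adjoin R ({s1} : Set A)) *
        Submodule.span R {t2 * s1 * t2} *
        Subalgebra.toSubmodule (Algebra.adjoin R ({s1} : Set A)) := by
  have hs1t1 : ∀ x : A, s1*(t1*x) = x := fun x => by rw [← mul_assoc, h1, one_mul]
  have ht1s1 : ∀ x : A, t1*(s1*x) = x := fun x => by rw [← mul_assoc, h1', one_mul]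
  have hs2t2 : ∀ x : A, s2*(t2*x) = x := fun x => by rw [← mul_assoc, h2, one_mul]
  have ht2s2 : ∀ x : A, t2*(s2*x) = x := fun x => by rw [← mul_assoc, h2', one_mul]
  have lcan2 : ∀ {x y : A}, s2*x = s2*y → x = y := fun {x y} h => by
    have h' := congrArg (fun z => t2*z) h
    simpa only [ht2s2] using h'
  have lcan1 : ∀ {x y : A}, s1*x = s1*y → x = y := fun {x y} h => by
    have h' := congrArg (fun z => t1*z) h
    simpa only [ht1s1] using h'
  have hbrx : ∀ x : A, s1*(s2*(s1*x)) = s2*(s1*(s2*x)) := fun x => by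
    simp only [← mul_assoc]; rw [hbraid]
  set ci : R := ((c⁻¹ : Rˣ) : R) with hcidef
  have hcci : (c : R) * ci = 1 := c.mul_inv
  have hcic : ci * (c : R) = 1 := c.inv_mul
  have h3 : s1*(s1*s1) = a•(s1*s1) + b•s1 + (c:R)•(1:A) := by
    have := hc1
    simp only [pow_succ, pow_zero, one_mul, mul_assoc] at this
    exact this
  have h3' : s2*(s2*s2) = a•(s2*s2) + b•s2 + (c:R)•(1:A) := by
    have := hc2
    simp only [pow_succ, pow_zero, one_mul, mul_assoc] at this
    exact this
  have hX1 : s1 * (ci•(s1*s1) - (ci*a)•s1 - (ci*b)•(1:A)) = 1 := by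
    simp only [mul_sub, mul_smul_comm, mul_one]
    rw [h3]
    simp only [smul_add, smul_smul]
    rw [hcic, mul_comm ci a, mul_comm ci b]
    abel_nf
    rw [one_smul]
  have t1eq : t1 = ci•(s1*s1) - (ci*a)•s1 - (ci*b)•(1:A) := by
    have : t1 * (s1 * (ci•(s1*s1) - (ci*a)•s1 - (ci*b)•(1:A))) = t1 * 1 := by rw [hX1]
    rw [ht1s1, mul_one] at this
    exact this.symm
  have hX2 : s2 * (ci•(s2*s2) - (ci*a)•s2 - (ci*b)•(1:A)) = 1 := by
    simp only [mul_sub, mul_smul_comm, mul_one]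
    rw [h3']
    simp only [smul_add, smul_smul]
    rw [hcic, mul_comm ci a, mul_comm ci b]
    abel_nf
    rw [one_smul]
  have t2eq : t2 = ci•(s2*s2) - (ci*a)•s2 - (ci*b)•(1:A) := by
    have : t2 * (s2 * (ci•(s2*s2) - (ci*a)•s2 - (ci*b)•(1:A))) = t2 * 1 := by rw [hX2]
    rw [ht2s2, mul_one] at this
    exact this.symm
  have s1sq : s1*s1 = a•s1 + b•(1:A) + (c:R)•t1 := by
    rw [t1eq]
    simp only [smul_sub, smul_smul, hcci]
    rw [mul_comm (c:R) (ci*a), mul_assoc ci a, mul_comm a (c:R), ← mul_assoc, hcic, one_mul,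
        mul_comm (c:R) (ci*b), mul_assoc ci b, mul_comm b (c:R), ← mul_assoc, hcic, one_mul,
        one_smul]
    abel
  have s2sq : s2*s2 = a•s2 + b•(1:A) + (c:R)•t2 := by
    rw [t2eq]
    simp only [smul_sub, smul_smul, hcci]
    rw [mul_comm (c:R) (ci*a), mul_assoc ci a, mul_comm a (c:R), ← mul_assoc, hcic, one_mul,
        mul_comm (c:R) (ci*b), mul_assoc ci b, mul_comm b (c:R), ← mul_assoc, hcic, one_mul,
        one_smul]
    abel
  have t2sq : t2*t2 = ci•s2 - (ci*a)•(1:A) - (ci*b)•t2 := by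
    have e : t2*t2 = t2 * (ci•(s2*s2) - (ci*a)•s2 - (ci*b)•(1:A)) := by rw [← t2eq]
    rw [e]
    simp only [mul_sub, mul_smul_comm, mul_one]
    rw [ht2s2 s2]
    rw [show t2*s2 = 1 from h2']
  have s2eq : s2 = a•(1:A) + b•t2 + (c:R)•(t2*t2) := by
    have e := congrArg (fun z => t2*z) s2sq
    simp only [mul_add, mul_smul_comm, mul_one] at e
    rw [ht2s2, h2'] at e
    exact e
  have b1 : t2*(s1*s2) = s1*(s2*t1) := by
    apply lcan2
    rw [hs2t2, ← hbrx t1, h1, mul_one]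
  have b1X : ∀ x : A, t2*(s1*(s2*x)) = s1*(s2*(t1*x)) := fun x => by
    have := congrArg (fun z => z*x) b1
    simpa only [mul_assoc] using this
  have ta : t2*(s1*(s1*s2)) = s1*(s2*(s2*t1)) := by
    apply lcan2
    rw [hs2t2, ← hbrx (s2*t1), ← b1, hs2t2]
  have taX : ∀ x : A, t2*(s1*(s1*(s2*x))) = s1*(s2*(s2*(t1*x))) := fun x => by
    have := congrArg (fun z => z*x) ta
    simpa only [mul_assoc] using this
  have invb : t2*(t1*t2) = t1*(t2*t1) := by
    apply lcan2; apply lcan1; apply lcan2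
    rw [hs2t2, hs1t1, h2, ← hbrx (t1*(t2*t1)), hs1t1, hs2t2, h1]
  have invbX : ∀ x : A, t2*(t1*(t2*x)) = t1*(t2*(t1*x)) := fun x => by
    have := congrArg (fun z => z*x) invb
    simpa only [mul_assoc] using this
  have expand : ∀ y : A, s2*y = a•y + b•(t2*y) + (c:R)•(t2*(t2*y)) := fun y => by
    have h := congrArg (fun z => z*y) s2eq
    simpa only [add_mul, smul_mul_assoc, one_mul, mul_assoc] using h
  have s2sqX : ∀ x : A, s2*(s2*x) = a•(s2*x) + b•x + (c:R)•(t2*x) := fun x => by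
    have h := congrArg (fun z => z*x) s2sq
    simpa only [add_mul, smul_mul_assoc, one_mul, mul_assoc] using h
  have s1sqX : ∀ x : A, s1*(s1*x) = a•(s1*x) + b•x + (c:R)•(t1*x) := fun x => by
    have h := congrArg (fun z => z*x) s1sq
    simpa only [add_mul, smul_mul_assoc, one_mul, mul_assoc] using h
  have t2sqX : ∀ x : A, t2*(t2*x) = ci•(s2*x) - (ci*a)•x - (ci*b)•(t2*x) := fun x => by
    have h := congrArg (fun z => z*x) t2sq
    simpa only [sub_mul, smul_mul_assoc, one_mul, mul_assoc] using h
  -- Submodule setup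
  set T : Submodule R A := Subalgebra.toSubmodule (Algebra.adjoin R ({s1} : Set A)) with hTdef
  set P1 : Submodule R A := T * Submodule.span R {s2} * T with hP1def
  set P2 : Submodule R A := T * Submodule.span R {t2} * T with hP2def
  set P3 : Submodule R A := T * Submodule.span R {t2 * s1 * t2} * T with hP3def
  set U : Submodule R A := T ⊔ P1 ⊔ P2 ⊔ P3 with hUdef
  -- T membership facts
  have h1T : (1:A) ∈ T := one_mem (Algebra.adjoin R ({s1} : Set A))
  have hs1T : s1 ∈ T := Algebra.subset_adjoin rfl
  have hTmul : ∀ {x y : A}, x ∈ T → y ∈ T → x*y ∈ T := by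
    intro x y hx hy
    rw [hTdef, Subalgebra.mem_toSubmodule] at hx hy ⊢
    exact mul_mem hx hy
  have ht1T : t1 ∈ T := by
    rw [t1eq]
    exact sub_mem (sub_mem (Submodule.smul_mem _ _ (hTmul hs1T hs1T))
      (Submodule.smul_mem _ _ hs1T)) (Submodule.smul_mem _ _ h1T)
  -- U access lemmas
  have hUT : T ≤ U := le_trans (le_trans le_sup_left le_sup_left) le_sup_left
  have hUP1 : P1 ≤ U := le_trans (le_trans le_sup_right le_sup_left) le_sup_left
  have hUP2 : P2 ≤ U := le_trans le_sup_right le_sup_left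
  have hUP3 : P3 ≤ U := le_sup_right
  have mem3 : ∀ (w x y : A), x ∈ T → y ∈ T →
      x*w*y ∈ T * Submodule.span R {w} * T := fun w x y hx hy =>
    Submodule.mul_mem_mul (Submodule.mul_mem_mul hx (Submodule.mem_span_singleton_self w)) hy
  have hU1 : ∀ x y : A, x ∈ T → y ∈ T → x*(s2*y) ∈ U := fun x y hx hy => by
    have := hUP1 (mem3 s2 x y hx hy)
    rwa [mul_assoc] at this
  have hU2 : ∀ x y : A, x ∈ T → y ∈ T → x*(t2*y) ∈ U := fun x y hx hy => by
    have := hUP2 (mem3 t2 x y hx hy)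
    rwa [mul_assoc] at this
  have hU3 : ∀ x y : A, x ∈ T → y ∈ T → x*(t2*(s1*(t2*y))) ∈ U := fun x y hx hy => by
    have := hUP3 (mem3 (t2*s1*t2) x y hx hy)
    simpa only [mul_assoc] using this
  have hUT' : ∀ x : A, x ∈ T → x ∈ U := fun x hx => hUT hx
  have hs2U : s2 ∈ U := by
    have := hU1 1 1 h1T h1T; simpa only [one_mul, mul_one] using this
  have ht2U : t2 ∈ U := by
    have := hU2 1 1 h1T h1T; simpa only [one_mul, mul_one] using this
  have hss : ∀ x y : A, x ∈ T → y ∈ T → x*(s2*(s2*y)) ∈ U := by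
    intro x y hx hy
    rw [s2sqX y]
    simp only [mul_add, mul_smul_comm]
    exact add_mem (add_mem (Submodule.smul_mem _ _ (hU1 x y hx hy))
      (Submodule.smul_mem _ _ (hUT' _ (hTmul hx hy))))
      (Submodule.smul_mem _ _ (hU2 x y hx hy))
  -- the nine core memberships
  have GP1_0 : s2*s2 ∈ U := by
    rw [s2sq]
    exact add_mem (add_mem (Submodule.smul_mem _ _ hs2U)
      (Submodule.smul_mem _ _ (hUT' _ h1T))) (Submodule.smul_mem _ _ ht2U)
  have GP1_1 : s2*(s1*s2) ∈ U := by
    rw [← mul_assoc, ← hbraid, mul_assoc]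
    exact hU1 s1 s1 hs1T hs1T
  have GP1_2 : s2*(s1*(s1*s2)) ∈ U := by
    rw [expand (s1*(s1*s2))]
    refine add_mem (add_mem (Submodule.smul_mem _ _ ?_) (Submodule.smul_mem _ _ ?_))
      (Submodule.smul_mem _ _ ?_)
    · have := hU1 (s1*s1) 1 (hTmul hs1T hs1T) h1T
      simpa only [mul_one, mul_assoc] using this
    · rw [ta]
      exact hss s1 t1 hs1T ht1T
    · rw [ta, s2sqX t1]
      simp only [mul_add, mul_smul_comm]
      refine add_mem (add_mem (Submodule.smul_mem _ _ ?_) (Submodule.smul_mem _ _ ?_))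
        (Submodule.smul_mem _ _ ?_)
      · rw [b1X t1]
        exact hU1 s1 (t1*t1) hs1T (hTmul ht1T ht1T)
      · rw [h1, mul_one]
        exact ht2U
      · have := hU3 1 t1 h1T ht1T
        simpa only [one_mul] using this
  have GP2_0 : t2*s2 ∈ U := by rw [h2']; exact hUT' _ h1T
  have GP2_1 : t2*(s1*s2) ∈ U := by rw [b1]; exact hU1 s1 t1 hs1T ht1T
  have GP2_2 : t2*(s1*(s1*s2)) ∈ U := by rw [ta]; exact hss s1 t1 hs1T ht1T
  have GP3_0 : (t2*s1*t2)*s2 ∈ U := by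
    rw [mul_assoc, mul_assoc, h2', mul_one]
    have := hU2 1 s1 h1T hs1T
    simpa only [one_mul] using this
  have GP3_1 : (t2*s1*t2)*(s1*s2) ∈ U := by
    simp only [mul_assoc]
    rw [b1, taX t1]
    exact hss s1 (t1*t1) hs1T (hTmul ht1T ht1T)
  have GP3_2 : (t2*s1*t2)*(s1*(s1*s2)) ∈ U := by
    simp only [mul_assoc]
    rw [ta, s2sqX t1]
    simp only [mul_add, mul_smul_comm]
    refine add_mem (add_mem (Submodule.smul_mem _ _ ?_) (Submodule.smul_mem _ _ ?_))
      (Submodule.smul_mem _ _ ?_)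
    · rw [taX t1]
      exact hss s1 (t1*t1) hs1T (hTmul ht1T ht1T)
    · have := hU2 1 (s1*(s1*t1)) h1T (hTmul hs1T (hTmul hs1T ht1T))
      simpa only [one_mul] using this
    · rw [s1sqX (t2*t1)]
      simp only [mul_add, mul_smul_comm]
      refine add_mem (add_mem (Submodule.smul_mem _ _ ?_) (Submodule.smul_mem _ _ ?_))
        (Submodule.smul_mem _ _ ?_)
      · have := hU3 1 t1 h1T ht1T
        simpa only [one_mul] using this
      · rw [t2sqX t1]
        refine sub_mem (sub_mem (Submodule.smul_mem _ _ ?_) (Submodule.smul_mem _ _ ?_))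
          (Submodule.smul_mem _ _ ?_)
        · have := hU1 1 t1 h1T ht1T
          simpa only [one_mul] using this
        · exact hUT' _ ht1T
        · have := hU2 1 t1 h1T ht1T
          simpa only [one_mul] using this
      · rw [invbX t1]
        exact hU2 t1 (t1*t1) ht1T (hTmul ht1T ht1T)
  -- submodule algebra lemmas
  have TT : T * T ≤ T := Submodule.mul_le.mpr fun x hx y hy => hTmul hx hy
  have hspan1T : Submodule.span R ({s1} : Set A) ≤ T :=
    Submodule.span_le.mpr (by simpa using hs1T)
  have le_mulT : ∀ N : Submodule R A, N ≤ N * T := fun N x hx => by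
    have := Submodule.mul_mem_mul hx h1T
    rwa [mul_one] at this
  have TP : ∀ w : A, T * (T * Submodule.span R {w} * T) ≤ T * Submodule.span R {w} * T := by
    intro w
    have e : T * (T * Submodule.span R {w} * T) = T * T * Submodule.span R {w} * T := by
      rw [← mul_assoc, ← mul_assoc]
    rw [e]
    exact mul_le_mul' (mul_le_mul' TT le_rfl) le_rfl
  have hTU : T * U ≤ U := by
    conv_lhs => rw [hUdef]
    rw [Submodule.mul_sup, Submodule.mul_sup, Submodule.mul_sup]
    refine sup_le (sup_le (sup_le ?_ ?_) ?_) ?_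
    · exact TT.trans hUT
    · exact ((TP s2).trans (le_of_eq hP1def.symm)).trans hUP1
    · exact ((TP t2).trans (le_of_eq hP2def.symm)).trans hUP2
    · exact ((TP (t2*s1*t2)).trans (le_of_eq hP3def.symm)).trans hUP3
  have hUabs : ∀ t : A, t ∈ T → ∀ u : A, u ∈ U → t*u ∈ U := fun t ht u hu =>
    hTU (Submodule.mul_mem_mul ht hu)
  -- T is spanned by 1, s1, s1*s1
  set V : Submodule R A := Submodule.span R ({1, s1, s1*s1} : Set A) with hVdef
  have h1V : (1:A) ∈ V := Submodule.subset_span (by simp)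
  have hs1V : s1 ∈ V := Submodule.subset_span (by simp)
  have hs1s1V : s1*s1 ∈ V := Submodule.subset_span (by simp)
  have hVs1 : ∀ v : A, v ∈ V → v*s1 ∈ V := by
    intro v hv
    induction hv using Submodule.span_induction with
    | mem z hz =>
      rcases hz with rfl | rfl | rfl
      · rw [one_mul]; exact hs1V
      · exact hs1s1V
      · rw [mul_assoc, h3]
        exact add_mem (add_mem (Submodule.smul_mem _ _ hs1s1V)
          (Submodule.smul_mem _ _ hs1V)) (Submodule.smul_mem _ _ h1V)
    | zero => rw [zero_mul]; exact zero_mem V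
    | add x y _ _ hx hy => rw [add_mul]; exact add_mem hx hy
    | smul r x _ hx => rw [smul_mul_assoc]; exact Submodule.smul_mem _ _ hx
  have hTV : T ≤ V := by
    rw [hTdef, Algebra.adjoin_eq_span]
    refine Submodule.span_le.mpr ?_
    intro z hz
    rw [SetLike.mem_coe, Submonoid.mem_closure_singleton] at hz
    obtain ⟨n, rfl⟩ := hz
    induction n with
    | zero => rw [pow_zero]; exact h1V
    | succ n ih => rw [pow_succ]; exact hVs1 _ ih
  -- the core lemma
  have coreW : ∀ w : A, w*s2 ∈ U → w*(s1*s2) ∈ U → w*(s1*(s1*s2)) ∈ U →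
      ∀ x : A, x ∈ T → w*(x*s2) ∈ U := by
    intro w h0 hA hB x hx
    have hxV : x ∈ V := hTV hx
    clear hx
    induction hxV using Submodule.span_induction with
    | mem z hz =>
      rcases hz with rfl | rfl | rfl
      · rw [one_mul]; exact h0
      · exact hA
      · rw [mul_assoc]; exact hB
    | zero => rw [zero_mul, mul_zero]; exact zero_mem U
    | add x y _ _ hx hy => rw [add_mul, mul_add]; exact add_mem hx hy
    | smul r x _ hx => rw [smul_mul_assoc, mul_smul_comm]; exact Submodule.smul_mem _ _ hx
  have pieceK2 : ∀ w : A, (∀ x : A, x ∈ T → w*(x*s2) ∈ U) →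
      (T * Submodule.span R {w} * T) * Submodule.span R {s2} ≤ U := by
    intro w hw
    refine Submodule.mul_le.mpr ?_
    intro p hp q hq
    obtain ⟨r, rfl⟩ := Submodule.mem_span_singleton.mp hq
    rw [mul_smul_comm]
    refine Submodule.smul_mem _ _ ?_
    refine Submodule.mul_induction_on hp ?_ ?_
    · intro m hm x hx
      refine Submodule.mul_induction_on hm (C := fun m => m*x*s2 ∈ U) ?_ ?_
      · intro t ht w' hw'
        obtain ⟨r', rfl⟩ := Submodule.mem_span_singleton.mp hw'
        have base : t*(w*(x*s2)) ∈ U := hUabs t ht _ (hw x hx)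
        have e : t*(r'•w)*x*s2 = r'•(t*(w*(x*s2))) := by
          simp only [mul_smul_comm, smul_mul_assoc, mul_assoc]
        rw [e]
        exact Submodule.smul_mem _ _ base
      · intro m1 m2 hm1 hm2
        rw [add_mul, add_mul]
        exact add_mem hm1 hm2
    · intro p1 p2 hp1 hp2
      rw [add_mul]
      exact add_mem hp1 hp2
  have K2 : U * Submodule.span R {s2} ≤ U := by
    conv_lhs => rw [hUdef]
    rw [Submodule.sup_mul, Submodule.sup_mul, Submodule.sup_mul]
    refine sup_le (sup_le (sup_le ?_ ?_) ?_) ?_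
    · exact le_trans (le_mulT _) ((le_of_eq hP1def.symm).trans hUP1)
    · rw [hP1def]
      exact pieceK2 s2 (coreW s2 GP1_0 GP1_1 GP1_2)
    · rw [hP2def]
      exact pieceK2 t2 (coreW t2 GP2_0 GP2_1 GP2_2)
    · rw [hP3def]
      exact pieceK2 (t2*s1*t2) (coreW (t2*s1*t2) GP3_0 GP3_1 GP3_2)
  have pieceK1 : ∀ w : A,
      (T * Submodule.span R {w} * T) * Submodule.span R {s1} ≤ T * Submodule.span R {w} * T := by
    intro w
    rw [mul_assoc]
    exact mul_le_mul' le_rfl ((mul_le_mul' le_rfl hspan1T).trans TT)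
  have K1 : U * Submodule.span R {s1} ≤ U := by
    conv_lhs => rw [hUdef]
    rw [Submodule.sup_mul, Submodule.sup_mul, Submodule.sup_mul]
    refine sup_le (sup_le (sup_le ?_ ?_) ?_) ?_
    · exact ((mul_le_mul' le_rfl hspan1T).trans TT).trans hUT
    · rw [hP1def]; exact (pieceK1 s2).trans ((le_of_eq hP1def.symm).trans hUP1)
    · rw [hP2def]; exact (pieceK1 t2).trans ((le_of_eq hP2def.symm).trans hUP2)
    · rw [hP3def]; exact (pieceK1 (t2*s1*t2)).trans ((le_of_eq hP3def.symm).trans hUP3)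
  have rmul1 : ∀ u : A, u ∈ U → u*s1 ∈ U := fun u hu =>
    K1 (Submodule.mul_mem_mul hu (Submodule.mem_span_singleton_self s1))
  have rmul2 : ∀ u : A, u ∈ U → u*s2 ∈ U := fun u hu =>
    K2 (Submodule.mul_mem_mul hu (Submodule.mem_span_singleton_self s2))
  -- conclusion
  symm
  rw [← top_le_iff]
  intro x _
  have hx : x ∈ Subalgebra.toSubmodule (Algebra.adjoin R ({s1, s2} : Set A)) := by
    rw [hgen]; exact trivial
  rw [Algebra.adjoin_eq_span] at hx
  have hcl : (Submonoid.closure ({s1, s2} : Set A) : Set A) ⊆ (U : Set A) := by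
    intro z hz
    have key : z ∈ U ∧ ∀ u : A, u ∈ U → u*z ∈ U := by
      induction hz using Submonoid.closure_induction with
      | mem w hw =>
        rcases hw with rfl | rfl
        · exact ⟨hUT' _ hs1T, rmul1⟩
        · exact ⟨hs2U, rmul2⟩
      | one => exact ⟨hUT' _ h1T, fun u hu => by rwa [mul_one]⟩
      | mul x y hx hy ihx ihy =>
        refine ⟨ihy.2 x ihx.1, fun u hu => ?_⟩
        rw [← mul_assoc]
        exact ihy.2 _ (ihx.2 u hu)
    exact key.1
  exact (Submodule.span_le.mpr hcl) hx
end

section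
/- In the cubic Hecke algebra A_3, one has A_3 = u_1 u_2 u_1 u_2 = u_2 u_1 u_2 u_1, where u_i is the R-subalgebra generated by s_i. -/
open Submodule

section
variable {R A : Type*} [CommRing R] [Ring A] [Algebra R A]
variable (a b : R) (c : Rˣ)

lemma hecke_inv_right (x : A) (hcx : x ^ 3 = a • x ^ 2 + b • x + (c : R) • (1 : A)) :
    x * ((↑c⁻¹ : R) • (x * x - a • x - b • (1 : A))) = 1 := by
  have h : x * (x * x - a • x - b • (1:A)) = (c : R) • (1 : A) := by
    have : x * (x * x - a • x - b • (1:A)) = x ^ 3 - a • x ^ 2 - b • x := by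
      simp only [mul_sub, mul_smul_comm, mul_one, pow_succ, pow_zero, one_mul]
      try noncomm_ring
    rw [this, hcx]; abel
  rw [mul_smul_comm, h, smul_smul, Units.inv_mul, one_smul]

lemma hecke_inv_left (x : A) (hcx : x ^ 3 = a • x ^ 2 + b • x + (c : R) • (1 : A)) :
    ((↑c⁻¹ : R) • (x * x - a • x - b • (1 : A))) * x = 1 := by
  have h : (x * x - a • x - b • (1:A)) * x = (c : R) • (1 : A) := by
    have : (x * x - a • x - b • (1:A)) * x = x ^ 3 - a • x ^ 2 - b • x := by
      simp only [sub_mul, smul_mul_assoc, one_mul, pow_succ, pow_zero]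
      try noncomm_ring
    rw [this, hcx]; abel
  rw [smul_mul_assoc, h, smul_smul, Units.inv_mul, one_smul]

lemma hecke_span (x ix : A) (hx1 : x * ix = 1) (hx2 : ix * x = 1)
    (hxx : x * x = a • x + b • (1:A) + (c : R) • ix)
    (hixx : ix * ix = (↑c⁻¹ : R) • x - ((↑c⁻¹ : R) * a) • (1:A) - ((↑c⁻¹ : R) * b) • ix)
    (hixm : ix ∈ Algebra.adjoin R ({x} : Set A)) :
    Subalgebra.toSubmodule (Algebra.adjoin R ({x} : Set A)) =
      Submodule.span R ({1, x, ix} : Set A) := by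
  set S := Submodule.span R ({1, x, ix} : Set A) with hS
  have h1 : (1:A) ∈ S := subset_span (by simp)
  have hxS : x ∈ S := subset_span (by simp)
  have hixS : ix ∈ S := subset_span (by simp)
  have hmul : ∀ p q : A, p ∈ S → q ∈ S → p * q ∈ S := by
    intro p q hp hq
    induction hp using span_induction with
    | mem p hpm =>
      induction hq using span_induction with
      | mem q hqm =>
        simp only [Set.mem_insert_iff, Set.mem_singleton_iff] at hpm hqm
        rcases hpm with rfl | rfl | rfl <;> rcases hqm with rfl | rfl | rfl
        · rw [one_mul]; exact h1
        · rw [one_mul]; exact hxS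
        · rw [one_mul]; exact hixS
        · rw [mul_one]; exact hxS
        · rw [hxx]
          exact add_mem (add_mem (smul_mem _ _ hxS) (smul_mem _ _ h1)) (smul_mem _ _ hixS)
        · rw [hx1]; exact h1
        · rw [mul_one]; exact hixS
        · rw [hx2]; exact h1
        · rw [hixx]
          exact sub_mem (sub_mem (smul_mem _ _ hxS) (smul_mem _ _ h1)) (smul_mem _ _ hixS)
      | zero => rw [mul_zero]; exact zero_mem _
      | add q1 q2 _ _ hq1 hq2 => rw [mul_add]; exact add_mem hq1 hq2
      | smul t q _ hq => rw [mul_smul_comm]; exact smul_mem _ _ hq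
    | zero => rw [zero_mul]; exact zero_mem _
    | add p1 p2 _ _ hp1 hp2 => rw [add_mul]; exact add_mem hp1 hp2
    | smul t p _ hp => rw [smul_mul_assoc]; exact smul_mem _ _ hp
  refine le_antisymm ?_ ?_
  · intro z hz
    have hadj : Algebra.adjoin R ({x} : Set A) ≤ S.toSubalgebra h1 hmul := by
      apply Algebra.adjoin_le
      intro z hz
      rw [Set.mem_singleton_iff] at hz
      subst hz
      exact hxS
    exact hadj hz
  · rw [span_le]
    intro z hz
    simp only [Set.mem_insert_iff, Set.mem_singleton_iff] at hz
    rcases hz with rfl | rfl | rfl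
    · exact (Algebra.adjoin R ({x} : Set A)).one_mem
    · exact Algebra.subset_adjoin rfl
    · exact hixm

end

section
variable {A : Type*} [Ring A]

lemma braid_identities (x y ix iy : A)
    (hx1 : x * ix = 1) (hx2 : ix * x = 1) (hy1 : y * iy = 1) (hy2 : iy * y = 1)
    (hb : x * y * x = y * x * y) :
    y * x * iy = ix * (y * x) ∧
    y * ix * iy = ix * (iy * x) ∧
    iy * x * y = x * (y * ix) ∧
    iy * ix * y = x * (iy * ix) ∧
    x * iy * ix = iy * (ix * y) ∧
    ix * y * x = y * (x * iy) ∧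
    iy * ix * iy = ix * (iy * ix) ∧
    iy * (x * (y * x)) = x * y ∧
    iy * (x * (y * (y * x))) = x * (y * (y * (x * iy))) ∧
    y * (ix * (iy * ix)) = ix * iy ∧
    y * (ix * (iy * (iy * ix))) = ix * (iy * (iy * (ix * y))) := by
  set X : Aˣ := ⟨x, ix, hx1, hx2⟩ with hX
  set Y : Aˣ := ⟨y, iy, hy1, hy2⟩ with hY
  have Bu : X * Y * X = Y * X * Y := Units.ext (by exact hb)
  have U1 : Y * X * Y⁻¹ = X⁻¹ * (Y * X) := by
    rw [show Y * X * Y⁻¹ = X⁻¹ * (X * Y * X * Y⁻¹) by group, Bu]; group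
  have U2 : Y * X⁻¹ * Y⁻¹ = X⁻¹ * (Y⁻¹ * X) := by
    rw [show Y * X⁻¹ * Y⁻¹ = (Y * X * Y⁻¹)⁻¹ by group, U1]; group
  have U3 : Y⁻¹ * X * Y = X * (Y * X⁻¹) := by
    rw [show Y⁻¹ * X * Y = Y⁻¹ * (X * Y * X) * X⁻¹ by group, Bu]; group
  have U4 : Y⁻¹ * X⁻¹ * Y = X * (Y⁻¹ * X⁻¹) := by
    rw [show Y⁻¹ * X⁻¹ * Y = (Y⁻¹ * X * Y)⁻¹ by group, U3]; group
  have U1' : X * Y * X⁻¹ = Y⁻¹ * (X * Y) := by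
    rw [show X * Y * X⁻¹ = Y⁻¹ * (Y * X * Y * X⁻¹) by group, ← Bu]; group
  have U2' : X * Y⁻¹ * X⁻¹ = Y⁻¹ * (X⁻¹ * Y) := by
    rw [show X * Y⁻¹ * X⁻¹ = (X * Y * X⁻¹)⁻¹ by group, U1']; group
  have U3' : X⁻¹ * Y * X = Y * (X * Y⁻¹) := by
    rw [show X⁻¹ * Y * X = X⁻¹ * (Y * X * Y) * Y⁻¹ by group, ← Bu]; group
  have UB2 : Y⁻¹ * X⁻¹ * Y⁻¹ = X⁻¹ * (Y⁻¹ * X⁻¹) := by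
    rw [show Y⁻¹ * X⁻¹ * Y⁻¹ = (Y * X * Y)⁻¹ by group, ← Bu]; group
  have UG1 : Y⁻¹ * (X * (Y * X)) = X * Y := by
    rw [show Y⁻¹ * (X * (Y * X)) = Y⁻¹ * (X * Y * X) by group, Bu]; group
  have UG2 : Y⁻¹ * (X * (Y * (Y * X))) = X * (Y * (Y * (X * Y⁻¹))) := by
    calc Y⁻¹ * (X * (Y * (Y * X))) = (Y⁻¹ * X * Y) * (Y * X) := by group
      _ = (X * (Y * X⁻¹)) * (Y * X) := by rw [U3]
      _ = (X * Y) * (X⁻¹ * Y * X) := by group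
      _ = (X * Y) * (Y * (X * Y⁻¹)) := by rw [U3']
      _ = X * (Y * (Y * (X * Y⁻¹))) := by group
  have UG1x : Y * (X⁻¹ * (Y⁻¹ * X⁻¹)) = X⁻¹ * Y⁻¹ := by
    calc Y * (X⁻¹ * (Y⁻¹ * X⁻¹)) = (Y * X⁻¹ * Y⁻¹) * X⁻¹ := by group
      _ = (X⁻¹ * (Y⁻¹ * X)) * X⁻¹ := by rw [U2]
      _ = X⁻¹ * Y⁻¹ := by group
  have UG2x : Y * (X⁻¹ * (Y⁻¹ * (Y⁻¹ * X⁻¹))) = X⁻¹ * (Y⁻¹ * (Y⁻¹ * (X⁻¹ * Y))) := by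
    calc Y * (X⁻¹ * (Y⁻¹ * (Y⁻¹ * X⁻¹))) = (Y * X⁻¹ * Y⁻¹) * (Y⁻¹ * X⁻¹) := by group
      _ = (X⁻¹ * (Y⁻¹ * X)) * (Y⁻¹ * X⁻¹) := by rw [U2]
      _ = (X⁻¹ * Y⁻¹) * (X * Y⁻¹ * X⁻¹) := by group
      _ = (X⁻¹ * Y⁻¹) * (Y⁻¹ * (X⁻¹ * Y)) := by rw [U2']
      _ = X⁻¹ * (Y⁻¹ * (Y⁻¹ * (X⁻¹ * Y))) := by group
  exact ⟨congrArg Units.val U1, congrArg Units.val U2, congrArg Units.val U3,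
    congrArg Units.val U4, congrArg Units.val U2', congrArg Units.val U3',
    congrArg Units.val UB2, congrArg Units.val UG1, congrArg Units.val UG2,
    congrArg Units.val UG1x, congrArg Units.val UG2x⟩

end
section
variable {R A : Type*} [CommRing R] [Ring A] [Algebra R A]

lemma hecke_top (a b : R) (c : Rˣ) (x y : A)
    (hb : x * y * x = y * x * y)
    (hcx : x ^ 3 = a • x ^ 2 + b • x + (c : R) • (1 : A))
    (hcy : y ^ 3 = a • y ^ 2 + b • y + (c : R) • (1 : A))
    (hgen : Algebra.adjoin R ({x, y} : Set A) = ⊤) :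
    (⊤ : Submodule R A) =
      Subalgebra.toSubmodule (Algebra.adjoin R ({x} : Set A)) *
      Subalgebra.toSubmodule (Algebra.adjoin R ({y} : Set A)) *
      Subalgebra.toSubmodule (Algebra.adjoin R ({x} : Set A)) *
      Subalgebra.toSubmodule (Algebra.adjoin R ({y} : Set A)) := by
  set U : Submodule R A := Subalgebra.toSubmodule (Algebra.adjoin R ({x} : Set A)) with hU
  set V : Submodule R A := Subalgebra.toSubmodule (Algebra.adjoin R ({y} : Set A)) with hV
  set ix : A := (↑c⁻¹ : R) • (x * x - a • x - b • (1 : A)) with hixdef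
  set iy : A := (↑c⁻¹ : R) • (y * y - a • y - b • (1 : A)) with hiydef
  have hx1 : x * ix = 1 := by rw [hixdef]; exact hecke_inv_right a b c x hcx
  have hx2 : ix * x = 1 := by rw [hixdef]; exact hecke_inv_left a b c x hcx
  have hy1 : y * iy = 1 := by rw [hiydef]; exact hecke_inv_right a b c y hcy
  have hy2 : iy * y = 1 := by rw [hiydef]; exact hecke_inv_left a b c y hcy
  have hxadj : x ∈ Algebra.adjoin R ({x} : Set A) := Algebra.subset_adjoin rfl
  have hyadj : y ∈ Algebra.adjoin R ({y} : Set A) := Algebra.subset_adjoin rfl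
  have hixadj : ix ∈ Algebra.adjoin R ({x} : Set A) := by
    rw [hixdef]
    exact Subalgebra.smul_mem _ (sub_mem (sub_mem (mul_mem hxadj hxadj)
      (Subalgebra.smul_mem _ hxadj a)) (Subalgebra.smul_mem _ (one_mem _) b)) _
  have hiyadj : iy ∈ Algebra.adjoin R ({y} : Set A) := by
    rw [hiydef]
    exact Subalgebra.smul_mem _ (sub_mem (sub_mem (mul_mem hyadj hyadj)
      (Subalgebra.smul_mem _ hyadj a)) (Subalgebra.smul_mem _ (one_mem _) b)) _
  have hxx : x * x = a • x + b • (1:A) + (c : R) • ix := by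
    rw [hixdef, smul_smul, Units.mul_inv, one_smul]; abel
  have hyy : y * y = a • y + b • (1:A) + (c : R) • iy := by
    rw [hiydef, smul_smul, Units.mul_inv, one_smul]; abel
  have hixx : ix * ix = (↑c⁻¹ : R) • x - ((↑c⁻¹ : R) * a) • (1:A) - ((↑c⁻¹ : R) * b) • ix := by
    nth_rewrite 2 [hixdef]
    rw [mul_smul_comm]
    have e : ix * (x * x - a • x - b • (1:A)) = x - a • (1:A) - b • ix := by
      rw [mul_sub, mul_sub, mul_smul_comm, mul_smul_comm, mul_one, ← mul_assoc, hx2, one_mul]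
    rw [e, smul_sub, smul_sub, smul_smul, smul_smul]
  have hiyy : iy * iy = (↑c⁻¹ : R) • y - ((↑c⁻¹ : R) * a) • (1:A) - ((↑c⁻¹ : R) * b) • iy := by
    nth_rewrite 2 [hiydef]
    rw [mul_smul_comm]
    have e : iy * (y * y - a • y - b • (1:A)) = y - a • (1:A) - b • iy := by
      rw [mul_sub, mul_sub, mul_smul_comm, mul_smul_comm, mul_one, ← mul_assoc, hy2, one_mul]
    rw [e, smul_sub, smul_sub, smul_smul, smul_smul]
  have hspanU : U = Submodule.span R ({1, x, ix} : Set A) := by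
    rw [hU]; exact hecke_span a b c x ix hx1 hx2 hxx hixx hixadj
  have hspanV : V = Submodule.span R ({1, y, iy} : Set A) := by
    rw [hV]; exact hecke_span a b c y iy hy1 hy2 hyy hiyy hiyadj
  obtain ⟨i1, i2, i3, i4, i5, i6, i7, i8, i9, i10, i11⟩ :=
    braid_identities x y ix iy hx1 hx2 hy1 hy2 hb
  -- y = a•1 + b•iy + c•(iy*iy)
  have h1y : iy * (y * y) = y := by rw [← mul_assoc, hy2, one_mul]
  have ymid : y = a • (1:A) + b • iy + (c : R) • (iy * iy) := by
    conv_lhs => rw [← h1y]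
    rw [hyy, mul_add, mul_add, mul_smul_comm, mul_smul_comm, mul_smul_comm, hy2, mul_one]
  have H2A : iy * (x * (iy * x)) = (↑c⁻¹ : R) • (x * (y * (y * (x * iy))))
      - ((↑c⁻¹ : R) * a) • (x * y) - ((↑c⁻¹ : R) * b) • (iy * (x * x)) := by
    have e1 : iy * (x * (iy * x)) = (↑c⁻¹ : R) • (iy * (x * (y * (y * x))))
        - ((↑c⁻¹ : R) * a) • (iy * (x * (y * x))) - ((↑c⁻¹ : R) * b) • (iy * (x * x)) := by
      nth_rewrite 2 [hiydef]
      simp only [smul_mul_assoc, mul_smul_comm, sub_mul, mul_sub, smul_sub, smul_smul,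
        one_mul, mul_one, mul_assoc]
    rw [e1, i8, i9]
  have H3A : y * (ix * (y * ix)) = a • (y * (ix * ix)) + b • (ix * iy)
      + (c : R) • (ix * (iy * (iy * (ix * y)))) := by
    have e1 : y * (ix * (y * ix)) = a • (y * (ix * ix)) + b • (y * (ix * (iy * ix)))
        + (c : R) • (y * (ix * (iy * (iy * ix)))) := by
      nth_rewrite 2 [ymid]
      simp only [add_mul, mul_add, smul_mul_assoc, mul_smul_comm, one_mul, mul_one, mul_assoc]
    rw [e1, i10, i11]
  -- membership helpers
  have h1U : (1:A) ∈ U := (Algebra.adjoin R ({x} : Set A)).one_mem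
  have hxU : x ∈ U := hxadj
  have hixU : ix ∈ U := hixadj
  have h1V : (1:A) ∈ V := (Algebra.adjoin R ({y} : Set A)).one_mem
  have hyV : y ∈ V := hyadj
  have hiyV : iy ∈ V := hiyadj
  have mulU : ∀ {p q : A}, p ∈ U → q ∈ U → p * q ∈ U := by
    intro p q hp hq
    rw [hU] at hp hq ⊢
    exact (Subalgebra.mem_toSubmodule _).mpr (mul_mem ((Subalgebra.mem_toSubmodule _).mp hp)
      ((Subalgebra.mem_toSubmodule _).mp hq))
  have mulV : ∀ {p q : A}, p ∈ V → q ∈ V → p * q ∈ V := by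
    intro p q hp hq
    rw [hV] at hp hq ⊢
    exact (Subalgebra.mem_toSubmodule _).mpr (mul_mem ((Subalgebra.mem_toSubmodule _).mp hp)
      ((Subalgebra.mem_toSubmodule _).mp hq))
  have memP4 : ∀ {p q r s : A}, p ∈ U → q ∈ V → r ∈ U → s ∈ V →
      p * q * r * s ∈ U * V * U * V := fun hp hq hr hs =>
    Submodule.mul_mem_mul (Submodule.mul_mem_mul (Submodule.mul_mem_mul hp hq) hr) hs
  -- left multiplication by y
  have yP : ∀ w ∈ U * V * U * V, y * w ∈ U * V * U * V := by
    intro w hw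
    refine Submodule.mul_induction_on hw (fun m hm s hs => ?_)
      (fun w1 w2 h1 h2 => by rw [mul_add]; exact add_mem h1 h2)
    refine Submodule.mul_induction_on hm (fun m2 hm2 r hr => ?_)
      (fun w1 w2 h1 h2 => by
        rw [show y * ((w1 + w2) * s) = y * (w1 * s) + y * (w2 * s) by noncomm_ring]
        exact add_mem h1 h2)
    refine Submodule.mul_induction_on hm2 (fun p hp q hq => ?_)
      (fun w1 w2 h1 h2 => by
        rw [show y * ((w1 + w2) * r * s) = y * (w1 * r * s) + y * (w2 * r * s) by noncomm_ring]
        exact add_mem h1 h2)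
    rw [hspanU] at hp
    induction hp using Submodule.span_induction with
    | mem p hpm =>
      rw [hspanV] at hq
      induction hq using Submodule.span_induction with
      | mem q hqm =>
        simp only [Set.mem_insert_iff, Set.mem_singleton_iff] at hpm hqm
        obtain hp3 | hp3 | hp3 := hpm <;> obtain hq3 | hq3 | hq3 := hqm <;> rw [hp3, hq3]
        · rw [show y * ((1:A) * 1 * r * s) = 1 * y * r * s by noncomm_ring]
          exact memP4 h1U hyV hr hs
        · rw [show y * ((1:A) * y * r * s) = 1 * (y * y) * r * s by noncomm_ring]
          exact memP4 h1U (mulV hyV hyV) hr hs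
        · rw [show y * ((1:A) * iy * r * s) = 1 * (y * iy) * r * s by noncomm_ring]
          exact memP4 h1U (mulV hyV hiyV) hr hs
        · rw [show y * (x * 1 * r * s) = 1 * y * (x * r) * s by noncomm_ring]
          exact memP4 h1U hyV (mulU hxU hr) hs
        · -- braid case
          rw [show y * (x * y * r * s) = y * x * y * r * s by noncomm_ring, ← hb,
            show x * y * x * r * s = x * y * (x * r) * s by noncomm_ring]
          exact memP4 hxU hyV (mulU hxU hr) hs
        · rw [show y * (x * iy * r * s) = y * x * iy * (r * s) by noncomm_ring, i1,
            show ix * (y * x) * (r * s) = ix * y * (x * r) * s by noncomm_ring]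
          exact memP4 hixU hyV (mulU hxU hr) hs
        · rw [show y * (ix * 1 * r * s) = 1 * y * (ix * r) * s by noncomm_ring]
          exact memP4 h1U hyV (mulU hixU hr) hs
        · -- hard case (ix, y): induct on r
          rw [hspanU] at hr
          induction hr using Submodule.span_induction with
          | mem r hrm =>
            simp only [Set.mem_insert_iff, Set.mem_singleton_iff] at hrm
            obtain hr3 | hr3 | hr3 := hrm <;> rw [hr3]
            · rw [show y * (ix * y * 1 * s) = 1 * y * ix * (y * s) by noncomm_ring]
              exact memP4 h1U hyV hixU (mulV hyV hs)
            · rw [show y * (ix * y * x * s) = y * (ix * y * x) * s by noncomm_ring, i6,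
                show y * (y * (x * iy)) * s = 1 * (y * y) * x * (iy * s) by noncomm_ring]
              exact memP4 h1U (mulV hyV hyV) hxU (mulV hiyV hs)
            · rw [show y * (ix * y * ix * s) = y * (ix * (y * ix)) * s by noncomm_ring, H3A,
                add_mul, add_mul]
              simp only [smul_mul_assoc]
              refine add_mem (add_mem (smul_mem _ _ ?_) (smul_mem _ _ ?_)) (smul_mem _ _ ?_)
              · rw [show y * (ix * ix) * s = 1 * y * (ix * ix) * s by noncomm_ring]
                exact memP4 h1U hyV (mulU hixU hixU) hs
              · rw [show ix * iy * s = ix * iy * 1 * s by noncomm_ring]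
                exact memP4 hixU hiyV h1U hs
              · rw [show ix * (iy * (iy * (ix * y))) * s = ix * (iy * iy) * ix * (y * s) by
                  noncomm_ring]
                exact memP4 hixU (mulV hiyV hiyV) hixU (mulV hyV hs)
          | zero =>
            rw [show y * (ix * y * (0:A) * s) = 0 by noncomm_ring]; exact zero_mem _
          | add r1 r2 h1 h2 ih1 ih2 =>
            rw [show y * (ix * y * (r1 + r2) * s) = y * (ix * y * r1 * s) + y * (ix * y * r2 * s)
              by noncomm_ring]
            exact add_mem ih1 ih2
          | smul t r h ih =>
            rw [show y * (ix * y * (t • r) * s) = t • (y * (ix * y * r * s)) by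
              simp only [mul_smul_comm, smul_mul_assoc]]
            exact smul_mem _ _ ih
        · rw [show y * (ix * iy * r * s) = y * ix * iy * (r * s) by noncomm_ring, i2,
            show ix * (iy * x) * (r * s) = ix * iy * (x * r) * s by noncomm_ring]
          exact memP4 hixU hiyV (mulU hxU hr) hs
      | zero =>
        rw [show y * (p * 0 * r * s) = 0 by noncomm_ring]; exact zero_mem _
      | add q1 q2 h1 h2 ih1 ih2 =>
        rw [show y * (p * (q1 + q2) * r * s) = y * (p * q1 * r * s) + y * (p * q2 * r * s) by
          noncomm_ring]
        exact add_mem ih1 ih2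
      | smul t q h ih =>
        rw [show y * (p * (t • q) * r * s) = t • (y * (p * q * r * s)) by
          simp only [mul_smul_comm, smul_mul_assoc]]
        exact smul_mem _ _ ih
    | zero =>
      rw [show y * ((0:A) * q * r * s) = 0 by noncomm_ring]; exact zero_mem _
    | add p1 p2 h1 h2 ih1 ih2 =>
      rw [show y * ((p1 + p2) * q * r * s) = y * (p1 * q * r * s) + y * (p2 * q * r * s) by
        noncomm_ring]
      exact add_mem ih1 ih2
    | smul t p h ih =>
      rw [show y * ((t • p) * q * r * s) = t • (y * (p * q * r * s)) by
        simp only [mul_smul_comm, smul_mul_assoc]]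
      exact smul_mem _ _ ih
  -- left multiplication by iy
  have iyP : ∀ w ∈ U * V * U * V, iy * w ∈ U * V * U * V := by
    intro w hw
    refine Submodule.mul_induction_on hw (fun m hm s hs => ?_)
      (fun w1 w2 h1 h2 => by rw [mul_add]; exact add_mem h1 h2)
    refine Submodule.mul_induction_on hm (fun m2 hm2 r hr => ?_)
      (fun w1 w2 h1 h2 => by
        rw [show iy * ((w1 + w2) * s) = iy * (w1 * s) + iy * (w2 * s) by noncomm_ring]
        exact add_mem h1 h2)
    refine Submodule.mul_induction_on hm2 (fun p hp q hq => ?_)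
      (fun w1 w2 h1 h2 => by
        rw [show iy * ((w1 + w2) * r * s) = iy * (w1 * r * s) + iy * (w2 * r * s) by noncomm_ring]
        exact add_mem h1 h2)
    rw [hspanU] at hp
    induction hp using Submodule.span_induction with
    | mem p hpm =>
      rw [hspanV] at hq
      induction hq using Submodule.span_induction with
      | mem q hqm =>
        simp only [Set.mem_insert_iff, Set.mem_singleton_iff] at hpm hqm
        obtain hp3 | hp3 | hp3 := hpm <;> obtain hq3 | hq3 | hq3 := hqm <;> rw [hp3, hq3]
        · rw [show iy * ((1:A) * 1 * r * s) = 1 * iy * r * s by noncomm_ring]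
          exact memP4 h1U hiyV hr hs
        · rw [show iy * ((1:A) * y * r * s) = 1 * (iy * y) * r * s by noncomm_ring]
          exact memP4 h1U (mulV hiyV hyV) hr hs
        · rw [show iy * ((1:A) * iy * r * s) = 1 * (iy * iy) * r * s by noncomm_ring]
          exact memP4 h1U (mulV hiyV hiyV) hr hs
        · rw [show iy * (x * 1 * r * s) = 1 * iy * (x * r) * s by noncomm_ring]
          exact memP4 h1U hiyV (mulU hxU hr) hs
        · rw [show iy * (x * y * r * s) = iy * x * y * (r * s) by noncomm_ring, i3,
            show x * (y * ix) * (r * s) = x * y * (ix * r) * s by noncomm_ring]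
          exact memP4 hxU hyV (mulU hixU hr) hs
        · -- hard case (x, iy): induct on r
          rw [hspanU] at hr
          induction hr using Submodule.span_induction with
          | mem r hrm =>
            simp only [Set.mem_insert_iff, Set.mem_singleton_iff] at hrm
            obtain hr3 | hr3 | hr3 := hrm <;> rw [hr3]
            · rw [show iy * (x * iy * 1 * s) = 1 * iy * x * (iy * s) by noncomm_ring]
              exact memP4 h1U hiyV hxU (mulV hiyV hs)
            · rw [show iy * (x * iy * x * s) = iy * (x * (iy * x)) * s by noncomm_ring, H2A,
                sub_mul, sub_mul]
              simp only [smul_mul_assoc]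
              refine sub_mem (sub_mem (smul_mem _ _ ?_) (smul_mem _ _ ?_)) (smul_mem _ _ ?_)
              · rw [show x * (y * (y * (x * iy))) * s = x * (y * y) * x * (iy * s) by
                  noncomm_ring]
                exact memP4 hxU (mulV hyV hyV) hxU (mulV hiyV hs)
              · rw [show x * y * s = x * y * 1 * s by noncomm_ring]
                exact memP4 hxU hyV h1U hs
              · rw [show iy * (x * x) * s = 1 * iy * (x * x) * s by noncomm_ring]
                exact memP4 h1U hiyV (mulU hxU hxU) hs
            · rw [show iy * (x * iy * ix * s) = iy * (x * iy * ix) * s by noncomm_ring, i5,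
                show iy * (iy * (ix * y)) * s = 1 * (iy * iy) * ix * (y * s) by noncomm_ring]
              exact memP4 h1U (mulV hiyV hiyV) hixU (mulV hyV hs)
          | zero =>
            rw [show iy * (x * iy * (0:A) * s) = 0 by noncomm_ring]; exact zero_mem _
          | add r1 r2 h1 h2 ih1 ih2 =>
            rw [show iy * (x * iy * (r1 + r2) * s) = iy * (x * iy * r1 * s) + iy * (x * iy * r2 * s)
              by noncomm_ring]
            exact add_mem ih1 ih2
          | smul t r h ih =>
            rw [show iy * (x * iy * (t • r) * s) = t • (iy * (x * iy * r * s)) by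
              simp only [mul_smul_comm, smul_mul_assoc]]
            exact smul_mem _ _ ih
        · rw [show iy * (ix * 1 * r * s) = 1 * iy * (ix * r) * s by noncomm_ring]
          exact memP4 h1U hiyV (mulU hixU hr) hs
        · rw [show iy * (ix * y * r * s) = iy * ix * y * (r * s) by noncomm_ring, i4,
            show x * (iy * ix) * (r * s) = x * iy * (ix * r) * s by noncomm_ring]
          exact memP4 hxU hiyV (mulU hixU hr) hs
        · rw [show iy * (ix * iy * r * s) = iy * ix * iy * (r * s) by noncomm_ring, i7,
            show ix * (iy * ix) * (r * s) = ix * iy * (ix * r) * s by noncomm_ring]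
          exact memP4 hixU hiyV (mulU hixU hr) hs
      | zero =>
        rw [show iy * (p * 0 * r * s) = 0 by noncomm_ring]; exact zero_mem _
      | add q1 q2 h1 h2 ih1 ih2 =>
        rw [show iy * (p * (q1 + q2) * r * s) = iy * (p * q1 * r * s) + iy * (p * q2 * r * s) by
          noncomm_ring]
        exact add_mem ih1 ih2
      | smul t q h ih =>
        rw [show iy * (p * (t • q) * r * s) = t • (iy * (p * q * r * s)) by
          simp only [mul_smul_comm, smul_mul_assoc]]
        exact smul_mem _ _ ih
    | zero =>
      rw [show iy * ((0:A) * q * r * s) = 0 by noncomm_ring]; exact zero_mem _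
    | add p1 p2 h1 h2 ih1 ih2 =>
      rw [show iy * ((p1 + p2) * q * r * s) = iy * (p1 * q * r * s) + iy * (p2 * q * r * s) by
        noncomm_ring]
      exact add_mem ih1 ih2
    | smul t p h ih =>
      rw [show iy * ((t • p) * q * r * s) = t • (iy * (p * q * r * s)) by
        simp only [mul_smul_comm, smul_mul_assoc]]
      exact smul_mem _ _ ih
  -- left multiplication by arbitrary elements of V
  have hyleft : ∀ g ∈ V, ∀ w ∈ U * V * U * V, g * w ∈ U * V * U * V := by
    intro g hg w hw
    rw [hspanV] at hg
    induction hg using Submodule.span_induction with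
    | mem g hgm =>
      simp only [Set.mem_insert_iff, Set.mem_singleton_iff] at hgm
      rcases hgm with rfl | rfl | rfl
      · rw [one_mul]; exact hw
      · exact yP w hw
      · exact iyP w hw
    | zero => rw [zero_mul]; exact zero_mem _
    | add g1 g2 h1 h2 ih1 ih2 => rw [add_mul]; exact add_mem ih1 ih2
    | smul t g h ih => rw [smul_mul_assoc]; exact smul_mem _ _ ih
  -- left multiplication by arbitrary elements of U
  have hxleft : ∀ g ∈ U, ∀ w ∈ U * V * U * V, g * w ∈ U * V * U * V := by
    intro g hg w hw
    refine Submodule.mul_induction_on hw (fun m hm s hs => ?_)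
      (fun w1 w2 h1 h2 => by rw [mul_add]; exact add_mem h1 h2)
    refine Submodule.mul_induction_on hm (fun m2 hm2 r hr => ?_)
      (fun w1 w2 h1 h2 => by
        rw [show g * ((w1 + w2) * s) = g * (w1 * s) + g * (w2 * s) by noncomm_ring]
        exact add_mem h1 h2)
    refine Submodule.mul_induction_on hm2 (fun p hp q hq => ?_)
      (fun w1 w2 h1 h2 => by
        rw [show g * ((w1 + w2) * r * s) = g * (w1 * r * s) + g * (w2 * r * s) by noncomm_ring]
        exact add_mem h1 h2)
    rw [show g * (p * q * r * s) = g * p * q * r * s by noncomm_ring]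
    exact memP4 (mulU hg hp) hq hr hs
  -- closure under multiplication
  have PPmul : ∀ w ∈ U * V * U * V, ∀ w' ∈ U * V * U * V, w * w' ∈ U * V * U * V := by
    intro w hw w' hw'
    refine Submodule.mul_induction_on hw (fun m hm s hs => ?_)
      (fun w1 w2 h1 h2 => by rw [add_mul]; exact add_mem h1 h2)
    refine Submodule.mul_induction_on hm (fun m2 hm2 r hr => ?_)
      (fun w1 w2 h1 h2 => by
        rw [show (w1 + w2) * s * w' = w1 * s * w' + w2 * s * w' by noncomm_ring]
        exact add_mem h1 h2)
    refine Submodule.mul_induction_on hm2 (fun p hp q hq => ?_)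
      (fun w1 w2 h1 h2 => by
        rw [show (w1 + w2) * r * s * w' = w1 * r * s * w' + w2 * r * s * w' by noncomm_ring]
        exact add_mem h1 h2)
    rw [show p * q * r * s * w' = p * (q * (r * (s * w'))) by noncomm_ring]
    exact hxleft p hp _ (hyleft q hq _ (hxleft r hr _ (hyleft s hs _ hw')))
  -- conclude
  have h1P : (1:A) ∈ U * V * U * V := by
    have := memP4 h1U h1V h1U h1V; simpa using this
  have hxP : x ∈ U * V * U * V := by
    have := memP4 hxU h1V h1U h1V; simpa using this
  have hyP2 : y ∈ U * V * U * V := by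
    have := memP4 h1U hyV h1U h1V; simpa using this
  refine le_antisymm ?_ le_top
  intro z _
  have hle : Algebra.adjoin R ({x, y} : Set A) ≤
      (U * V * U * V).toSubalgebra h1P (fun p q hp hq => PPmul p hp q hq) := by
    apply Algebra.adjoin_le
    intro w hw
    rcases hw with rfl | hw
    · exact hxP
    · rw [Set.mem_singleton_iff] at hw
      subst hw
      exact hyP2
  exact hle (by rw [hgen]; trivial)

end

/-- In the cubic Hecke algebra `A_3`, one has
`A_3 = u_1 u_2 u_1 u_2 = u_2 u_1 u_2 u_1`, where `u_i` is the `R`-subalgebra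
generated by `s_i`. -/
theorem stmt8 (R A : Type*) [CommRing R] [Ring A] [Algebra R A]
    (a b : R) (c : Rˣ) (s1 s2 : A)
    (hbraid : s1 * s2 * s1 = s2 * s1 * s2)
    (hc1 : s1 ^ 3 = a • s1 ^ 2 + b • s1 + (c : R) • (1 : A))
    (hc2 : s2 ^ 3 = a • s2 ^ 2 + b • s2 + (c : R) • (1 : A))
    (hgen : Algebra.adjoin R ({s1, s2} : Set A) = ⊤) :
    (⊤ : Submodule R A) =
      Subalgebra.toSubmodule (Algebra.adjoin R ({s1} : Set A)) *
      Subalgebra.toSubmodule (Algebra.adjoin R ({s2} : Set A)) *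
      Subalgebra.toSubmodule (Algebra.adjoin R ({s1} : Set A)) *
      Subalgebra.toSubmodule (Algebra.adjoin R ({s2} : Set A)) ∧
    (⊤ : Submodule R A) =
      Subalgebra.toSubmodule (Algebra.adjoin R ({s2} : Set A)) *
      Subalgebra.toSubmodule (Algebra.adjoin R ({s1} : Set A)) *
      Subalgebra.toSubmodule (Algebra.adjoin R ({s2} : Set A)) *
      Subalgebra.toSubmodule (Algebra.adjoin R ({s1} : Set A)) := by
  constructor
  · exact hecke_top a b c s1 s2 hbraid hc1 hc2 hgen
  · exact hecke_top a b c s2 s1 hbraid.symm hc2 hc1 (by rw [Set.pair_comm s2 s1]; exact hgen)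
end

section
/- In the cubic Hecke algebra A_3, one has A_3 = u_1 u_2 u_1 + u_2 u_1 u_2 + R·(s_1⁻¹ s_2 s_1⁻¹ s_2), where u_i is the R-subalgebra generated by s_i. -/
open scoped Pointwise


/-- In the cubic Hecke algebra `A_3`, one has
`A_3 = u_1 u_2 u_1 + u_2 u_1 u_2 + R·(s_1⁻¹ s_2 s_1⁻¹ s_2)`, where `u_i` is the
`R`-subalgebra generated by `s_i` and `t1 = s_1⁻¹`. -/
theorem stmt9 (R A : Type*) [CommRing R] [Ring A] [Algebra R A]
    (a b : R) (c : Rˣ) (s1 s2 t1 t2 : A)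
    (hbraid : s1 * s2 * s1 = s2 * s1 * s2)
    (hc1 : s1 ^ 3 = a • s1 ^ 2 + b • s1 + (c : R) • (1 : A))
    (hc2 : s2 ^ 3 = a • s2 ^ 2 + b • s2 + (c : R) • (1 : A))
    (h1 : s1 * t1 = 1) (h1' : t1 * s1 = 1)
    (h2 : s2 * t2 = 1) (h2' : t2 * s2 = 1)
    (hgen : Algebra.adjoin R ({s1, s2} : Set A) = ⊤) :
    (⊤ : Submodule R A) =
      Subalgebra.toSubmodule (Algebra.adjoin R ({s1} : Set A)) *
        Subalgebra.toSubmodule (Algebra.adjoin R ({s2} : Set A)) *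
        Subalgebra.toSubmodule (Algebra.adjoin R ({s1} : Set A)) ⊔
      Subalgebra.toSubmodule (Algebra.adjoin R ({s2} : Set A)) *
        Subalgebra.toSubmodule (Algebra.adjoin R ({s1} : Set A)) *
        Subalgebra.toSubmodule (Algebra.adjoin R ({s2} : Set A)) ⊔
      Submodule.span R {t1 * s2 * t1 * s2} := by
  -- basic cancellation helpers (right-associated)
  have e11 : ∀ x : A, s1 * (t1 * x) = x := fun x => by rw [← mul_assoc, h1, one_mul]
  have e11' : ∀ x : A, t1 * (s1 * x) = x := fun x => by rw [← mul_assoc, h1', one_mul]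
  have e22 : ∀ x : A, s2 * (t2 * x) = x := fun x => by rw [← mul_assoc, h2, one_mul]
  have e22' : ∀ x : A, t2 * (s2 * x) = x := fun x => by rw [← mul_assoc, h2', one_mul]
  have hbr : ∀ x : A, s1 * (s2 * (s1 * x)) = s2 * (s1 * (s2 * x)) := fun x => by
    rw [← mul_assoc, ← mul_assoc, hbraid, mul_assoc, mul_assoc]
  have hbrp : s1 * (s2 * s1) = s2 * (s1 * s2) := by
    rw [← mul_assoc, hbraid, mul_assoc]
  have q12x : ∀ x : A, s1 * (s2 * (t1 * x)) = t2 * (s1 * (s2 * x)) := fun x => by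
    calc s1 * (s2 * (t1 * x)) = t2 * (s2 * (s1 * (s2 * (t1 * x)))) := (e22' _).symm
      _ = t2 * (s1 * (s2 * (s1 * (t1 * x)))) := by rw [← hbr]
      _ = t2 * (s1 * (s2 * x)) := by rw [e11]
  have q21x : ∀ x : A, s2 * (s1 * (t2 * x)) = t1 * (s2 * (s1 * x)) := fun x => by
    calc s2 * (s1 * (t2 * x)) = t1 * (s1 * (s2 * (s1 * (t2 * x)))) := (e11' _).symm
      _ = t1 * (s2 * (s1 * (s2 * (t2 * x)))) := by rw [hbr]
      _ = t1 * (s2 * (s1 * x)) := by rw [e22]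
  have p12x : ∀ x : A, s1 * (t2 * (t1 * x)) = t2 * (t1 * (s2 * x)) := fun x => by
    calc s1 * (t2 * (t1 * x)) = t2 * (s2 * (s1 * (t2 * (t1 * x)))) := (e22' _).symm
      _ = t2 * (t1 * (s2 * (s1 * (t1 * x)))) := by rw [q21x]
      _ = t2 * (t1 * (s2 * x)) := by rw [e11]
  have p21x : ∀ x : A, s2 * (t1 * (t2 * x)) = t1 * (t2 * (s1 * x)) := fun x => by
    calc s2 * (t1 * (t2 * x)) = t1 * (s1 * (s2 * (t1 * (t2 * x)))) := (e11' _).symm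
      _ = t1 * (t2 * (s1 * (s2 * (t2 * x)))) := by rw [q12x]
      _ = t1 * (t2 * (s1 * x)) := by rw [e22]
  have q12p : s1 * (s2 * t1) = t2 * (s1 * s2) := by simpa using q12x 1
  have q21p : s2 * (s1 * t2) = t1 * (s2 * s1) := by simpa using q21x 1
  have p21p : s2 * (t1 * t2) = t1 * (t2 * s1) := by simpa using p21x 1
  -- cubic relations, right-associated
  have cube1x : ∀ x : A, s1 * (s1 * (s1 * x)) =
      a • (s1 * (s1 * x)) + b • (s1 * x) + (c : R) • x := fun x => by
    have h := congrArg (· * x) hc1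
    simpa [pow_succ, pow_zero, one_mul, mul_assoc, add_mul, smul_mul_assoc] using h
  have cube2x : ∀ x : A, s2 * (s2 * (s2 * x)) =
      a • (s2 * (s2 * x)) + b • (s2 * x) + (c : R) • x := fun x => by
    have h := congrArg (· * x) hc2
    simpa [pow_succ, pow_zero, one_mul, mul_assoc, add_mul, smul_mul_assoc] using h
  have sq1x : ∀ x : A, s1 * (s1 * x) = a • (s1 * x) + b • x + (c : R) • (t1 * x) := fun x => by
    have h := cube1x (t1 * x)
    simp only [e11] at h
    exact h
  have sq2x : ∀ x : A, s2 * (s2 * x) = a • (s2 * x) + b • x + (c : R) • (t2 * x) := fun x => by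
    have h := cube2x (t2 * x)
    simp only [e22] at h
    exact h
  have ct1x : ∀ x : A, (c : R) • (t1 * x) = s1 * (s1 * x) - a • (s1 * x) - b • x := fun x => by
    rw [sq1x x]; abel
  have ct2x : ∀ x : A, (c : R) • (t2 * x) = s2 * (s2 * x) - a • (s2 * x) - b • x := fun x => by
    rw [sq2x x]; abel
  have ct1 : (c : R) • t1 = s1 * s1 - a • s1 - b • (1 : A) := by simpa using ct1x 1
  have ct2 : (c : R) • t2 = s2 * s2 - a • s2 - b • (1 : A) := by simpa using ct2x 1
  have sq2p : s2 * s2 = a • s2 + b • (1 : A) + (c : R) • t2 := by simpa using sq2x 1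
  -- submodules
  set U1 : Submodule R A := Subalgebra.toSubmodule (Algebra.adjoin R ({s1} : Set A)) with hU1def
  set U2 : Submodule R A := Subalgebra.toSubmodule (Algebra.adjoin R ({s2} : Set A)) with hU2def
  set W : Submodule R A := Submodule.span R {t1 * s2 * t1 * s2} with hWdef
  set M : Submodule R A := U1 * U2 * U1 ⊔ U2 * U1 * U2 ⊔ W with hMdef
  have hP1M : U1 * U2 * U1 ≤ M := le_trans le_sup_left le_sup_left
  have hP2M : U2 * U1 * U2 ≤ M := le_trans le_sup_right le_sup_left
  have hWM : W ≤ M := le_sup_right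
  have hs1 : s1 ∈ U1 := (Subalgebra.mem_toSubmodule _).2 (Algebra.self_mem_adjoin_singleton R s1)
  have hs2 : s2 ∈ U2 := (Subalgebra.mem_toSubmodule _).2 (Algebra.self_mem_adjoin_singleton R s2)
  have h1U1 : (1 : A) ∈ U1 := (Subalgebra.mem_toSubmodule _).2 (one_mem _)
  have h1U2 : (1 : A) ∈ U2 := (Subalgebra.mem_toSubmodule _).2 (one_mem _)
  have hu1 : ∀ {x y : A}, x ∈ U1 → y ∈ U1 → x * y ∈ U1 := fun hx hy =>
    (Subalgebra.mem_toSubmodule _).2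
      (mul_mem ((Subalgebra.mem_toSubmodule _).1 hx) ((Subalgebra.mem_toSubmodule _).1 hy))
  have hu2 : ∀ {x y : A}, x ∈ U2 → y ∈ U2 → x * y ∈ U2 := fun hx hy =>
    (Subalgebra.mem_toSubmodule _).2
      (mul_mem ((Subalgebra.mem_toSubmodule _).1 hx) ((Subalgebra.mem_toSubmodule _).1 hy))
  have hcinv : ∀ x : A, ((c⁻¹ : Rˣ) : R) • ((c : R) • x) = x := fun x => by
    rw [smul_smul, Units.inv_mul, one_smul]
  have ht1 : t1 ∈ U1 := by
    have : t1 = ((c⁻¹ : Rˣ) : R) • ((c : R) • t1) := (hcinv t1).symm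
    rw [this, ct1]
    exact Submodule.smul_mem _ _ (sub_mem (sub_mem (hu1 hs1 hs1)
      (Submodule.smul_mem _ _ hs1)) (Submodule.smul_mem _ _ h1U1))
  have ht2 : t2 ∈ U2 := by
    have : t2 = ((c⁻¹ : Rˣ) : R) • ((c : R) • t2) := (hcinv t2).symm
    rw [this, ct2]
    exact Submodule.smul_mem _ _ (sub_mem (sub_mem (hu2 hs2 hs2)
      (Submodule.smul_mem _ _ hs2)) (Submodule.smul_mem _ _ h1U2))
  have hss1 : s1 * s1 ∈ U1 := hu1 hs1 hs1
  have hss2 : s2 * s2 ∈ U2 := hu2 hs2 hs2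
  -- membership helpers
  have memP1 : ∀ {x y z : A}, x ∈ U1 → y ∈ U2 → z ∈ U1 → x * (y * z) ∈ M := by
    intro x y z hx hy hz
    rw [← mul_assoc]
    exact hP1M (Submodule.mul_mem_mul (Submodule.mul_mem_mul hx hy) hz)
  have memP2 : ∀ {x y z : A}, x ∈ U2 → y ∈ U1 → z ∈ U2 → x * (y * z) ∈ M := by
    intro x y z hx hy hz
    rw [← mul_assoc]
    exact hP2M (Submodule.mul_mem_mul (Submodule.mul_mem_mul hx hy) hz)
  have hwrM : t1 * (s2 * (t1 * s2)) ∈ M := by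
    have h := hWM (Submodule.subset_span rfl : t1 * s2 * t1 * s2 ∈ W)
    simpa [mul_assoc] using h
  have csmulM : ∀ {x : A}, (c : R) • x ∈ M → x ∈ M := fun {x} h => by
    have h' := M.smul_mem ((c⁻¹ : Rˣ) : R) h
    rwa [hcinv] at h'
  have h1M : (1 : A) ∈ M := by simpa using memP1 h1U1 h1U2 h1U1
  have hs1M : s1 ∈ M := by simpa using memP1 hs1 h1U2 h1U1
  have hs2M : s2 ∈ M := by simpa using memP2 hs2 h1U1 h1U2
  have ht1M : t1 ∈ M := by simpa using memP1 ht1 h1U2 h1U1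
  have ht2M : t2 ∈ M := by simpa using memP2 ht2 h1U1 h1U2
  -- adjoin is spanned by {1, s, t}
  have hspan : ∀ (s t : A), (∀ x : A, s * (s * x) = a • (s * x) + b • x + (c : R) • (t * x)) →
      (s * t = 1) →
      Subalgebra.toSubmodule (Algebra.adjoin R ({s} : Set A)) ≤
        Submodule.span R ({1, s, t} : Set A) := by
    intro s t hsq hst
    have hmem1 : (1 : A) ∈ Submodule.span R ({1, s, t} : Set A) :=
      Submodule.subset_span (by simp)
    have hmems : s ∈ Submodule.span R ({1, s, t} : Set A) :=
      Submodule.subset_span (by simp)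
    have hmemt : t ∈ Submodule.span R ({1, s, t} : Set A) :=
      Submodule.subset_span (by simp)
    have hcl : ∀ x ∈ Submodule.span R ({1, s, t} : Set A),
        s * x ∈ Submodule.span R ({1, s, t} : Set A) := by
      intro x hx
      induction hx using Submodule.span_induction with
      | mem y hy =>
        rcases hy with rfl | rfl | rfl
        · simpa using hmems
        · have h := hsq 1
          simp only [mul_one] at h
          rw [h]
          exact add_mem (add_mem (Submodule.smul_mem _ _ hmems)
            (Submodule.smul_mem _ _ hmem1)) (Submodule.smul_mem _ _ hmemt)
        · rw [hst]; exact hmem1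
      | zero => simp
      | add x y hx hy ihx ihy => rw [mul_add]; exact add_mem ihx ihy
      | smul r x hx ihx => rw [mul_smul_comm]; exact Submodule.smul_mem _ _ ihx
    have hpow : ∀ n : ℕ, s ^ n ∈ Submodule.span R ({1, s, t} : Set A) := by
      intro n
      induction n with
      | zero => simpa using hmem1
      | succ n ih => rw [pow_succ']; exact hcl _ ih
    rw [Algebra.adjoin_eq_span]
    refine Submodule.span_le.2 ?_
    intro x hx
    obtain ⟨n, rfl⟩ := Submonoid.mem_closure_singleton.1 hx
    exact hpow n
  have hU1le : U1 ≤ Submodule.span R ({1, s1, t1} : Set A) := hspan s1 t1 sq1x h1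
  have hU2le : U2 ≤ Submodule.span R ({1, s2, t2} : Set A) := hspan s2 t2 sq2x h2
  -- hard identity 1 : s1 * t2 * s1 * t2
  have hmain1 : s1 * (t2 * (s1 * (s2 * s2))) =
      a • (t2 * (s1 * (s2 * s2))) + b • (s2 * (t1 * s2)) + (c : R) • (t1 * (s2 * (t1 * s2))) := by
    calc s1 * (t2 * (s1 * (s2 * s2))) = s1 * (s1 * (s2 * (t1 * s2))) := by rw [← q12x]
      _ = a • (s1 * (s2 * (t1 * s2))) + b • (s2 * (t1 * s2))
            + (c : R) • (t1 * (s2 * (t1 * s2))) := sq1x _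
      _ = a • (t2 * (s1 * (s2 * s2))) + b • (s2 * (t1 * s2))
            + (c : R) • (t1 * (s2 * (t1 * s2))) := by rw [q12x]
  have hmid1 : s1 * (t2 * (s1 * s2)) = s1 * (s1 * (s2 * t1)) := by rw [← q12p]
  have hXeq : (c : R) • (s1 * (t2 * (s1 * t2))) =
      a • (t2 * (s1 * (s2 * s2))) + b • (s2 * (t1 * s2)) + (c : R) • (t1 * (s2 * (t1 * s2)))
        - a • (s1 * (s1 * (s2 * t1))) - b • (s1 * (t2 * s1)) := by
    have h0 : s1 * (t2 * (s1 * ((c : R) • t2))) = (c : R) • (s1 * (t2 * (s1 * t2))) := by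
      simp only [mul_smul_comm]
    rw [← h0, ct2]
    simp only [mul_sub, mul_smul_comm, mul_one]
    rw [hmain1, hmid1]
  have hX : s1 * (t2 * (s1 * t2)) ∈ M := by
    refine csmulM ?_
    rw [hXeq]
    refine sub_mem (sub_mem (add_mem (add_mem ?_ ?_) ?_) ?_) ?_
    · exact M.smul_mem a (memP2 ht2 hs1 hss2)
    · exact M.smul_mem b (memP2 hs2 ht1 hs2)
    · exact M.smul_mem _ hwrM
    · exact M.smul_mem a (by simpa [mul_assoc] using memP1 hss1 hs2 ht1)
    · exact M.smul_mem b (memP1 hs1 ht2 hs1)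
  -- hard identity : w' = t2 * s1 * t2 * s1
  have hterm2 : t2 * (s1 * (s2 * s1)) = s1 * s2 := by rw [hbrp, e22']
  have hterm1 : t2 * (s1 * (s2 * (s2 * s1))) =
      a • (s2 * s1) + b • (s1 * (s1 * t2)) + (c : R) • (s1 * (t2 * (s1 * t2))) := by
    calc t2 * (s1 * (s2 * (s2 * s1))) = s1 * (s2 * (t1 * (s2 * s1))) := by rw [← q12x]
      _ = s1 * (s2 * (s2 * (s1 * t2))) := by rw [← q21p]
      _ = s1 * (a • (s2 * (s1 * t2)) + b • (s1 * t2) + (c : R) • (t2 * (s1 * t2))) := by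
          rw [sq2x]
      _ = a • (s1 * (s2 * (s1 * t2))) + b • (s1 * (s1 * t2))
            + (c : R) • (s1 * (t2 * (s1 * t2))) := by simp only [mul_add, mul_smul_comm]
      _ = a • (s2 * (s1 * (s2 * t2))) + b • (s1 * (s1 * t2))
            + (c : R) • (s1 * (t2 * (s1 * t2))) := by rw [hbr]
      _ = a • (s2 * s1) + b • (s1 * (s1 * t2))
            + (c : R) • (s1 * (t2 * (s1 * t2))) := by rw [h2, mul_one]
  have hW'eq : (c : R) • (t2 * (s1 * (t2 * s1))) =
      a • (s2 * s1) + b • (s1 * (s1 * t2)) + (c : R) • (s1 * (t2 * (s1 * t2)))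
        - a • (s1 * s2) - b • (t2 * (s1 * s1)) := by
    have h0 : t2 * (s1 * ((c : R) • (t2 * s1))) = (c : R) • (t2 * (s1 * (t2 * s1))) := by
      simp only [mul_smul_comm]
    rw [← h0, ct2x s1]
    simp only [mul_sub, mul_smul_comm]
    rw [hterm1, hterm2]
  have hW' : t2 * (s1 * (t2 * s1)) ∈ M := by
    refine csmulM ?_
    rw [hW'eq]
    refine sub_mem (sub_mem (add_mem (add_mem ?_ ?_) ?_) ?_) ?_
    · exact M.smul_mem a (by simpa using memP2 hs2 hs1 h1U2)
    · exact M.smul_mem b (by simpa [mul_assoc] using memP1 hss1 ht2 h1U1)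
    · exact M.smul_mem _ hX
    · exact M.smul_mem a (by simpa using memP1 hs1 hs2 h1U1)
    · exact M.smul_mem b (by simpa [mul_assoc] using memP2 ht2 hss1 h1U2)
  -- hard identity : s2 * t1 * s2 * t1
  have hYterm1 : s2 * (t1 * (s2 * (s1 * s1))) =
      a • (s2 * (s1 * (t2 * s1))) + b • (s1 * (t2 * s1)) + (c : R) • (t2 * (s1 * (t2 * s1))) := by
    calc s2 * (t1 * (s2 * (s1 * s1))) = s2 * (s2 * (s1 * (t2 * s1))) := by rw [← q21x]
      _ = a • (s2 * (s1 * (t2 * s1))) + b • (s1 * (t2 * s1))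
            + (c : R) • (t2 * (s1 * (t2 * s1))) := sq2x _
  have hYterm2 : s2 * (t1 * (s2 * s1)) = s2 * (s2 * (s1 * t2)) := by rw [← q21p]
  have hYeq : (c : R) • (s2 * (t1 * (s2 * t1))) =
      a • (s2 * (s1 * (t2 * s1))) + b • (s1 * (t2 * s1)) + (c : R) • (t2 * (s1 * (t2 * s1)))
        - a • (s2 * (s2 * (s1 * t2))) - b • (s2 * (t1 * s2)) := by
    have h0 : s2 * (t1 * (s2 * ((c : R) • t1))) = (c : R) • (s2 * (t1 * (s2 * t1))) := by
      simp only [mul_smul_comm]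
    rw [← h0, ct1]
    simp only [mul_sub, mul_smul_comm, mul_one]
    rw [hYterm1, hYterm2]
  have hY : s2 * (t1 * (s2 * t1)) ∈ M := by
    refine csmulM ?_
    rw [hYeq]
    refine sub_mem (sub_mem (add_mem (add_mem ?_ ?_) ?_) ?_) ?_
    · refine M.smul_mem a ?_
      rw [q21x]
      exact memP1 ht1 hs2 hss1
    · exact M.smul_mem b (memP1 hs1 ht2 hs1)
    · exact M.smul_mem _ hW'
    · exact M.smul_mem a (by simpa [mul_assoc] using memP2 hss2 hs1 ht2)
    · exact M.smul_mem b (memP2 hs2 ht1 hs2)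
  -- s2 * w ∈ M
  have hA3 : t1 * (s2 * (t1 * (s2 * s2))) ∈ M := by
    rw [sq2p]
    simp only [mul_add, mul_smul_comm, mul_one]
    refine add_mem (add_mem ?_ ?_) ?_
    · exact M.smul_mem a hwrM
    · exact M.smul_mem b (memP1 ht1 hs2 ht1)
    · refine M.smul_mem _ ?_
      rw [p21p]
      simpa [mul_assoc] using memP1 (hu1 ht1 ht1) ht2 hs1
  have hA1 : t1 * (s2 * (s1 * (s2 * s2))) ∈ M := by
    rw [← hbr, e11']
    exact memP2 hs2 hs1 hs2
  have hm1eq : s2 * (s1 * (s1 * (s2 * (t1 * s2)))) =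
      a • (t1 * (s2 * (s1 * (s2 * s2)))) + b • (t1 * (s2 * (s2 * s2)))
        + (c : R) • (t1 * (s2 * (t1 * (s2 * s2)))) := by
    rw [q12x, q21x, sq1x (s2 * s2)]
    simp only [mul_add, mul_smul_comm]
  have hm1 : s2 * (s1 * (s1 * (s2 * (t1 * s2)))) ∈ M := by
    rw [hm1eq]
    refine add_mem (add_mem ?_ ?_) ?_
    · exact M.smul_mem a hA1
    · exact M.smul_mem b (by simpa [mul_assoc] using memP1 ht1 (hu2 hs2 hss2) h1U1)
    · exact M.smul_mem _ hA3
  have hS2Weq : (c : R) • (s2 * (t1 * (s2 * (t1 * s2)))) =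
      s2 * (s1 * (s1 * (s2 * (t1 * s2)))) - a • (s2 * (s1 * (s2 * (t1 * s2))))
        - b • (s2 * (s2 * (t1 * s2))) := by
    have h0 : s2 * ((c : R) • (t1 * (s2 * (t1 * s2)))) =
        (c : R) • (s2 * (t1 * (s2 * (t1 * s2)))) := by simp only [mul_smul_comm]
    rw [← h0, ct1x (s2 * (t1 * s2))]
    simp only [mul_sub, mul_smul_comm]
  have hS2W : s2 * (t1 * (s2 * (t1 * s2))) ∈ M := by
    refine csmulM ?_
    rw [hS2Weq]
    refine sub_mem (sub_mem ?_ ?_) ?_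
    · exact hm1
    · refine M.smul_mem a ?_
      rw [← hbr, e11]
      simpa [mul_assoc] using memP1 hs1 hss2 h1U1
    · exact M.smul_mem b (by simpa [mul_assoc] using memP2 hss2 ht1 hs2)
  -- stability of M under left multiplication
  have hP1M' : U1 * (U2 * U1) ≤ M := by rw [← mul_assoc]; exact hP1M
  have hP2M' : U2 * (U1 * U2) ≤ M := by rw [← mul_assoc]; exact hP2M
  have hcomap11 : U1 * U2 * U1 ≤ Submodule.comap (LinearMap.mulLeft R s1) M := by
    rw [mul_assoc]
    intro p hp
    simp only [Submodule.mem_comap, LinearMap.mulLeft_apply]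
    refine Submodule.mul_induction_on hp (fun m hm n hn => ?_) (fun x y hx hy => ?_)
    · rw [← mul_assoc]
      exact hP1M' (Submodule.mul_mem_mul (hu1 hs1 hm) hn)
    · rw [mul_add]; exact M.add_mem hx hy
  have hcomap22 : U2 * U1 * U2 ≤ Submodule.comap (LinearMap.mulLeft R s2) M := by
    rw [mul_assoc]
    intro p hp
    simp only [Submodule.mem_comap, LinearMap.mulLeft_apply]
    refine Submodule.mul_induction_on hp (fun m hm n hn => ?_) (fun x y hx hy => ?_)
    · rw [← mul_assoc]
      exact hP2M' (Submodule.mul_mem_mul (hu2 hs2 hm) hn)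
    · rw [mul_add]; exact M.add_mem hx hy
  have hcomapW1 : W ≤ Submodule.comap (LinearMap.mulLeft R s1) M := by
    rw [hWdef]
    refine Submodule.span_le.2 ?_
    intro x hx
    rw [Set.mem_singleton_iff] at hx
    subst hx
    simp only [SetLike.mem_coe, Submodule.mem_comap, LinearMap.mulLeft_apply]
    have hrw : s1 * (t1 * s2 * t1 * s2) = s2 * (t1 * s2) := by
      simp only [mul_assoc]; rw [e11]
    rw [hrw]
    exact memP2 hs2 ht1 hs2
  have hcomapW2 : W ≤ Submodule.comap (LinearMap.mulLeft R s2) M := by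
    rw [hWdef]
    refine Submodule.span_le.2 ?_
    intro x hx
    rw [Set.mem_singleton_iff] at hx
    subst hx
    simp only [SetLike.mem_coe, Submodule.mem_comap, LinearMap.mulLeft_apply]
    have hrw : s2 * (t1 * s2 * t1 * s2) = s2 * (t1 * (s2 * (t1 * s2))) := by
      simp only [mul_assoc]
    rw [hrw]
    exact hS2W
  have hcomap21 : U2 * U1 * U2 ≤ Submodule.comap (LinearMap.mulLeft R s1) M := by
    have hle : U2 * U1 * U2 ≤
        Submodule.span R ((({1, s2, t2} : Set A) * ({1, s1, t1} : Set A)) * ({1, s2, t2} : Set A)) := by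
      calc U2 * U1 * U2 ≤ Submodule.span R ({1, s2, t2} : Set A) *
            Submodule.span R ({1, s1, t1} : Set A) * Submodule.span R ({1, s2, t2} : Set A) :=
          mul_le_mul' (mul_le_mul' hU2le hU1le) hU2le
        _ = _ := by rw [Submodule.span_mul_span, Submodule.span_mul_span]
    refine hle.trans (Submodule.span_le.2 ?_)
    intro g hg
    obtain ⟨xy, hxy, z, hz, rfl⟩ := Set.mem_mul.1 hg
    obtain ⟨x, hx, y, hy, rfl⟩ := Set.mem_mul.1 hxy
    simp only [Set.mem_insert_iff, Set.mem_singleton_iff] at hx hy hz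
    simp only [SetLike.mem_coe, Submodule.mem_comap, LinearMap.mulLeft_apply]
    rcases hx with rfl | rfl | rfl
    · rcases hy with rfl | rfl | rfl
      · rcases hz with rfl | rfl | rfl
        · simp only [one_mul, mul_one, mul_assoc]
          exact hs1M
        · simp only [one_mul, mul_one, mul_assoc]
          simpa using memP1 hs1 hs2 h1U1
        · simp only [one_mul, mul_one, mul_assoc]
          simpa using memP1 hs1 ht2 h1U1
      · rcases hz with rfl | rfl | rfl
        · simp only [one_mul, mul_one, mul_assoc]
          simpa [mul_assoc] using memP1 hss1 h1U2 h1U1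
        · simp only [one_mul, mul_one, mul_assoc]
          simpa [mul_assoc] using memP1 hss1 hs2 h1U1
        · simp only [one_mul, mul_one, mul_assoc]
          simpa [mul_assoc] using memP1 hss1 ht2 h1U1
      · rcases hz with rfl | rfl | rfl
        · simp only [one_mul, mul_one, mul_assoc]
          rw [h1]; exact h1M
        · simp only [one_mul, mul_one, mul_assoc]
          rw [e11]; exact hs2M
        · simp only [one_mul, mul_one, mul_assoc]
          rw [e11]; exact ht2M
    · rcases hy with rfl | rfl | rfl
      · rcases hz with rfl | rfl | rfl
        · simp only [one_mul, mul_one, mul_assoc]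
          simpa using memP1 hs1 hs2 h1U1
        · simp only [one_mul, mul_one, mul_assoc]
          simpa [mul_assoc] using memP1 hs1 hss2 h1U1
        · simp only [one_mul, mul_one, mul_assoc]
          rw [h2, mul_one]; exact hs1M
      · rcases hz with rfl | rfl | rfl
        · simp only [one_mul, mul_one, mul_assoc]
          rw [hbrp]; exact memP2 hs2 hs1 hs2
        · simp only [one_mul, mul_one, mul_assoc]
          rw [hbr]; exact memP2 hs2 hs1 hss2
        · simp only [one_mul, mul_one, mul_assoc]
          rw [hbr, h2, mul_one]; simpa using memP2 hs2 hs1 h1U2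
      · rcases hz with rfl | rfl | rfl
        · simp only [one_mul, mul_one, mul_assoc]
          rw [q12p]; exact memP2 ht2 hs1 hs2
        · simp only [one_mul, mul_one, mul_assoc]
          rw [q12x]; exact memP2 ht2 hs1 hss2
        · simp only [one_mul, mul_one, mul_assoc]
          rw [q12x, h2, mul_one]; simpa using memP2 ht2 hs1 h1U2
    · rcases hy with rfl | rfl | rfl
      · rcases hz with rfl | rfl | rfl
        · simp only [one_mul, mul_one, mul_assoc]
          simpa using memP1 hs1 ht2 h1U1
        · simp only [one_mul, mul_one, mul_assoc]
          rw [h2', mul_one]; exact hs1M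
        · simp only [one_mul, mul_one, mul_assoc]
          simpa [mul_assoc] using memP1 hs1 (hu2 ht2 ht2) h1U1
      · rcases hz with rfl | rfl | rfl
        · simp only [one_mul, mul_one, mul_assoc]
          exact memP1 hs1 ht2 hs1
        · simp only [one_mul, mul_one, mul_assoc]
          rw [← q12p]; simpa [mul_assoc] using memP1 hss1 hs2 ht1
        · simp only [one_mul, mul_one, mul_assoc]
          exact hX
      · rcases hz with rfl | rfl | rfl
        · simp only [one_mul, mul_one, mul_assoc]
          exact memP1 hs1 ht2 ht1
        · simp only [one_mul, mul_one, mul_assoc]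
          rw [p12x]; exact memP2 ht2 ht1 hss2
        · simp only [one_mul, mul_one, mul_assoc]
          rw [p12x, h2, mul_one]; simpa using memP2 ht2 ht1 h1U2
  have hcomap12 : U1 * U2 * U1 ≤ Submodule.comap (LinearMap.mulLeft R s2) M := by
    have hle : U1 * U2 * U1 ≤
        Submodule.span R ((({1, s1, t1} : Set A) * ({1, s2, t2} : Set A)) * ({1, s1, t1} : Set A)) := by
      calc U1 * U2 * U1 ≤ Submodule.span R ({1, s1, t1} : Set A) *
            Submodule.span R ({1, s2, t2} : Set A) * Submodule.span R ({1, s1, t1} : Set A) :=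
          mul_le_mul' (mul_le_mul' hU1le hU2le) hU1le
        _ = _ := by rw [Submodule.span_mul_span, Submodule.span_mul_span]
    refine hle.trans (Submodule.span_le.2 ?_)
    intro g hg
    obtain ⟨xy, hxy, z, hz, rfl⟩ := Set.mem_mul.1 hg
    obtain ⟨x, hx, y, hy, rfl⟩ := Set.mem_mul.1 hxy
    simp only [Set.mem_insert_iff, Set.mem_singleton_iff] at hx hy hz
    simp only [SetLike.mem_coe, Submodule.mem_comap, LinearMap.mulLeft_apply]
    rcases hx with rfl | rfl | rfl
    · rcases hy with rfl | rfl | rfl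
      · rcases hz with rfl | rfl | rfl
        · simp only [one_mul, mul_one, mul_assoc]
          exact hs2M
        · simp only [one_mul, mul_one, mul_assoc]
          simpa using memP2 hs2 hs1 h1U2
        · simp only [one_mul, mul_one, mul_assoc]
          simpa using memP2 hs2 ht1 h1U2
      · rcases hz with rfl | rfl | rfl
        · simp only [one_mul, mul_one, mul_assoc]
          simpa [mul_assoc] using memP2 hss2 h1U1 h1U2
        · simp only [one_mul, mul_one, mul_assoc]
          simpa [mul_assoc] using memP2 hss2 hs1 h1U2
        · simp only [one_mul, mul_one, mul_assoc]
          simpa [mul_assoc] using memP2 hss2 ht1 h1U2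
      · rcases hz with rfl | rfl | rfl
        · simp only [one_mul, mul_one, mul_assoc]
          rw [h2]; exact h1M
        · simp only [one_mul, mul_one, mul_assoc]
          rw [e22]; exact hs1M
        · simp only [one_mul, mul_one, mul_assoc]
          rw [e22]; exact ht1M
    · rcases hy with rfl | rfl | rfl
      · rcases hz with rfl | rfl | rfl
        · simp only [one_mul, mul_one, mul_assoc]
          simpa using memP2 hs2 hs1 h1U2
        · simp only [one_mul, mul_one, mul_assoc]
          simpa [mul_assoc] using memP2 hs2 hss1 h1U2
        · simp only [one_mul, mul_one, mul_assoc]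
          rw [h1, mul_one]; exact hs2M
      · rcases hz with rfl | rfl | rfl
        · simp only [one_mul, mul_one, mul_assoc]
          exact memP2 hs2 hs1 hs2
        · simp only [one_mul, mul_one, mul_assoc]
          rw [← hbr]; exact memP1 hs1 hs2 hss1
        · simp only [one_mul, mul_one, mul_assoc]
          rw [← hbr, h1, mul_one]; simpa using memP1 hs1 hs2 h1U1
      · rcases hz with rfl | rfl | rfl
        · simp only [one_mul, mul_one, mul_assoc]
          rw [q21p]; exact memP1 ht1 hs2 hs1
        · simp only [one_mul, mul_one, mul_assoc]
          rw [q21x]; exact memP1 ht1 hs2 hss1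
        · simp only [one_mul, mul_one, mul_assoc]
          rw [q21x, h1, mul_one]; simpa using memP1 ht1 hs2 h1U1
    · rcases hy with rfl | rfl | rfl
      · rcases hz with rfl | rfl | rfl
        · simp only [one_mul, mul_one, mul_assoc]
          simpa using memP2 hs2 ht1 h1U2
        · simp only [one_mul, mul_one, mul_assoc]
          rw [h1', mul_one]; exact hs2M
        · simp only [one_mul, mul_one, mul_assoc]
          simpa [mul_assoc] using memP2 hs2 (hu1 ht1 ht1) h1U2
      · rcases hz with rfl | rfl | rfl
        · simp only [one_mul, mul_one, mul_assoc]
          exact memP2 hs2 ht1 hs2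
        · simp only [one_mul, mul_one, mul_assoc]
          rw [← q21p]; simpa [mul_assoc] using memP2 hss2 hs1 ht2
        · simp only [one_mul, mul_one, mul_assoc]
          exact hY
      · rcases hz with rfl | rfl | rfl
        · simp only [one_mul, mul_one, mul_assoc]
          rw [p21p]; exact memP1 ht1 ht2 hs1
        · simp only [one_mul, mul_one, mul_assoc]
          rw [p21x]; exact memP1 ht1 ht2 hss1
        · simp only [one_mul, mul_one, mul_assoc]
          rw [p21x, h1, mul_one]; simpa using memP1 ht1 ht2 h1U1
  have key1 : M ≤ Submodule.comap (LinearMap.mulLeft R s1) M := by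
    rw [hMdef]
    exact sup_le (sup_le hcomap11 hcomap21) hcomapW1
  have key2 : M ≤ Submodule.comap (LinearMap.mulLeft R s2) M := by
    rw [hMdef]
    exact sup_le (sup_le hcomap12 hcomap22) hcomapW2
  have main : ∀ x : A, ∀ m ∈ M, x * m ∈ M := by
    intro x
    have hx : x ∈ Algebra.adjoin R ({s1, s2} : Set A) := by rw [hgen]; trivial
    induction hx using Algebra.adjoin_induction with
    | mem y hy =>
      rcases hy with rfl | hy
      · exact fun m hm => key1 hm
      · rw [Set.mem_singleton_iff] at hy
        subst hy
        exact fun m hm => key2 hm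
    | algebraMap r =>
      intro m hm
      rw [← Algebra.smul_def]
      exact M.smul_mem r hm
    | add x y hx hy ihx ihy =>
      intro m hm
      rw [add_mul]
      exact M.add_mem (ihx m hm) (ihy m hm)
    | mul x y hx hy ihx ihy =>
      intro m hm
      rw [mul_assoc]
      exact ihx _ (ihy m hm)
  refine (Submodule.eq_top_iff'.2 fun x => ?_).symm
  simpa using main x 1 h1M
end

section
/- For n ≥ 3 and all 1 ≤ i,j ≤ n−1, in the cubic Hecke algebra A_n one has the equality of R-submodules u_i u_j u_i u_j = u_j u_i u_j u_i. -/
section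
variable {R A : Type*} [CommRing R] [Ring A] [Algebra R A]

private lemma stmt10_adjoin_singleton_cubic (a b : R) (cc : R) (s : A)
    (hs : s^3 = a • s^2 + b • s + cc • 1) :
    Subalgebra.toSubmodule (Algebra.adjoin R ({s} : Set A))
      = Submodule.span R ({1, s, s*s} : Set A) := by
  have hcube : s * s * s = a • (s*s) + b • s + cc • 1 := by
    have : s ^ 3 = s * s * s := by rw [pow_succ, sq]
    rw [← this, hs, sq]
  have stab : ∀ x ∈ Submodule.span R ({1, s, s*s} : Set A),
      x * s ∈ Submodule.span R ({1, s, s*s} : Set A) := by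
    intro x hx
    induction hx using Submodule.span_induction with
    | mem x hx =>
      rcases hx with rfl | rfl | rfl
      · simpa using Submodule.subset_span (show s ∈ ({1, s, s*s} : Set A) by simp)
      · exact Submodule.subset_span (by simp)
      · rw [hcube]
        refine Submodule.add_mem _ (Submodule.add_mem _ ?_ ?_) ?_ <;>
          exact Submodule.smul_mem _ _ (Submodule.subset_span (by simp))
    | zero => simp
    | add x y hx hy ihx ihy => rw [add_mul]; exact Submodule.add_mem _ ihx ihy
    | smul r x hx ihx => rw [smul_mul_assoc]; exact Submodule.smul_mem _ _ ihx
  have pows : ∀ m : ℕ, s ^ m ∈ Submodule.span R ({1, s, s*s} : Set A) := by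
    intro m
    induction m with
    | zero => simpa using Submodule.subset_span (show (1:A) ∈ ({1, s, s*s} : Set A) by simp)
    | succ k ih => rw [pow_succ]; exact stab _ ih
  apply le_antisymm
  · rw [Algebra.adjoin_eq_span]
    apply Submodule.span_le.2
    rintro x hx
    obtain ⟨m, rfl⟩ := Submonoid.mem_closure_singleton.1 hx
    exact pows m
  · apply Submodule.span_le.2
    rintro x (rfl | rfl | rfl)
    · exact Subalgebra.one_mem _
    · exact Algebra.subset_adjoin rfl
    · exact Subalgebra.mul_mem _ (Algebra.subset_adjoin rfl) (Algebra.subset_adjoin rfl)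

private lemma stmt10_core (a b : R) (c : Rˣ) (s t : A)
    (hb : s*t*s = t*s*t)
    (hcs : s^3 = a • s^2 + b • s + (c:R) • 1)
    (hct : t^3 = a • t^2 + b • t + (c:R) • 1) :
    Subalgebra.toSubmodule (Algebra.adjoin R ({t} : Set A)) *
    Subalgebra.toSubmodule (Algebra.adjoin R ({s} : Set A)) *
    Subalgebra.toSubmodule (Algebra.adjoin R ({t} : Set A)) *
    Subalgebra.toSubmodule (Algebra.adjoin R ({s} : Set A)) ≤
    Subalgebra.toSubmodule (Algebra.adjoin R ({s} : Set A)) *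
    Subalgebra.toSubmodule (Algebra.adjoin R ({t} : Set A)) *
    Subalgebra.toSubmodule (Algebra.adjoin R ({s} : Set A)) *
    Subalgebra.toSubmodule (Algebra.adjoin R ({t} : Set A)) := by
  set U : Submodule R A := Subalgebra.toSubmodule (Algebra.adjoin R ({s} : Set A)) with hUdef
  set V : Submodule R A := Subalgebra.toSubmodule (Algebra.adjoin R ({t} : Set A)) with hVdef
  have hU : U = Submodule.span R ({1, s, s*s} : Set A) := stmt10_adjoin_singleton_cubic a b _ s hcs
  have hV : V = Submodule.span R ({1, t, t*t} : Set A) := stmt10_adjoin_singleton_cubic a b _ t hct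
  set M : Submodule R A := U*V*U*V with hMdef
  have one_U : (1:A) ∈ U := (Subalgebra.mem_toSubmodule _).2 (one_mem _)
  have one_V : (1:A) ∈ V := (Subalgebra.mem_toSubmodule _).2 (one_mem _)
  have hsU : s ∈ U := (Subalgebra.mem_toSubmodule _).2 (Algebra.subset_adjoin rfl)
  have htV : t ∈ V := (Subalgebra.mem_toSubmodule _).2 (Algebra.subset_adjoin rfl)
  have Umul : ∀ {x y : A}, x ∈ U → y ∈ U → x*y ∈ U := fun hx hy =>
    (Subalgebra.mem_toSubmodule _).2
      (mul_mem ((Subalgebra.mem_toSubmodule _).1 hx) ((Subalgebra.mem_toSubmodule _).1 hy))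
  have Vmul : ∀ {x y : A}, x ∈ V → y ∈ V → x*y ∈ V := fun hx hy =>
    (Subalgebra.mem_toSubmodule _).2
      (mul_mem ((Subalgebra.mem_toSubmodule _).1 hx) ((Subalgebra.mem_toSubmodule _).1 hy))
  have hs2U : s*s ∈ U := Umul hsU hsU
  have ht2V : t*t ∈ V := Vmul htV htV
  set τ : A := t*t - a•t - b•(1:A) with hτdef
  set σ : A := s*s - a•s - b•(1:A) with hσdef
  have hσU : σ ∈ U := by
    rw [hσdef]
    exact Submodule.sub_mem _ (Submodule.sub_mem _ hs2U (Submodule.smul_mem _ _ hsU))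
      (Submodule.smul_mem _ _ one_U)
  have htτ : t * τ = (c:R)•(1:A) := by
    have h3 : t*(t*t) = a•(t*t) + b•t + (c:R)•(1:A) := by
      simpa [pow_succ, sq, mul_assoc] using hct
    rw [hτdef, mul_sub, mul_sub, mul_smul_comm, mul_smul_comm, mul_one, h3]; abel
  have hsσ : s * σ = (c:R)•(1:A) := by
    have h3 : s*(s*s) = a•(s*s) + b•s + (c:R)•(1:A) := by
      simpa [pow_succ, sq, mul_assoc] using hcs
    rw [hσdef, mul_sub, mul_sub, mul_smul_comm, mul_smul_comm, mul_one, h3]; abel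
  have hσs : σ * s = (c:R)•(1:A) := by
    have h3 : s*s*s = a•(s*s) + b•s + (c:R)•(1:A) := by
      simpa [pow_succ, sq] using hcs
    rw [hσdef, sub_mul, sub_mul, smul_mul_assoc, smul_mul_assoc, one_mul, h3]; abel
  have hcancel : ∀ x y : A, s*x = s*y → x = y := by
    intro x y h
    have h2 : σ*(s*x) = σ*(s*y) := by rw [h]
    rw [← mul_assoc, ← mul_assoc, hσs, smul_mul_assoc, smul_mul_assoc, one_mul, one_mul] at h2
    have key : ∀ z : A, ((c⁻¹ : Rˣ):R) • ((c:R) • z) = z := fun z => by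
      rw [smul_smul, Units.inv_mul, one_smul]
    rw [← key x, ← key y, h2]
  have hb' : s*(t*s) = t*(s*t) := by rw [← mul_assoc, hb, mul_assoc]
  have hbA : ∀ x : A, s*(t*(s*x)) = t*(s*(t*x)) := fun x => by
    simp only [← mul_assoc]; rw [hb]
  have hstsτ : ∀ x : A, s*(t*(s*(τ*x))) = (c:R)•(t*(s*x)) := fun x => by
    rw [hbA (τ*x), ← mul_assoc t τ x, htτ, smul_mul_assoc, one_mul, mul_smul_comm, mul_smul_comm]
  have ht2 : ∀ x : A, t*(t*x) = a•(t*x) + b•x + τ*x := fun x => by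
    have : τ*x = t*(t*x) - a•(t*x) - b•x := by
      rw [hτdef, sub_mul, sub_mul, smul_mul_assoc, smul_mul_assoc, one_mul, mul_assoc]
    rw [this]; abel
  have Jgen : ∀ x : A, t*(s*(s*(τ*x))) = σ*(t*(t*(s*x))) := by
    intro x
    apply hcancel
    rw [hbA (s*(τ*x)), hstsτ x, mul_smul_comm, ← mul_assoc s σ _, hsσ, smul_mul_assoc, one_mul]
  have memM : ∀ {w x y z : A}, w ∈ U → x ∈ V → y ∈ U → z ∈ V → w*x*y*z ∈ M :=
    fun hw hx hy hz =>
      Submodule.mul_mem_mul (Submodule.mul_mem_mul (Submodule.mul_mem_mul hw hx) hy) hz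
  have VU_le : V*U ≤ M := by
    intro x hx
    refine Submodule.mul_induction_on hx (fun v hv u hu => ?_)
      (fun p q hp hq => Submodule.add_mem _ hp hq)
    simpa [mul_assoc] using memM one_U hv hu one_V
  have MV_le : M*V ≤ M := by
    calc M*V = (U*V*U)*(V*V) := mul_assoc _ _ _
    _ ≤ (U*V*U)*V := mul_le_mul' le_rfl
        (Submodule.mul_le.2 (fun x hx y hy => Vmul hx hy))
  -- the key cases
  have key3 : ∀ u ∈ Submodule.span R ({1, s, s*s} : Set A),
      ∀ v ∈ Submodule.span R ({1, t, t*t} : Set A),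
      ∀ z ∈ Submodule.span R ({1, s, s*s} : Set A), t*(u*(v*z)) ∈ M := by
    intro u hu
    induction hu using Submodule.span_induction with
    | zero => intro v hv z hz; simp only [zero_mul, mul_zero]; exact Submodule.zero_mem _
    | add u₁ u₂ h₁ h₂ ih₁ ih₂ =>
        intro v hv z hz
        simp only [add_mul, mul_add]
        exact Submodule.add_mem _ (ih₁ v hv z hz) (ih₂ v hv z hz)
    | smul r u h ih =>
        intro v hv z hz
        simp only [smul_mul_assoc, mul_smul_comm]
        exact Submodule.smul_mem _ _ (ih v hv z hz)
    | mem u hu =>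
      rcases hu with h0 | h0 | h0 <;> rw [h0]
      · -- u = 1
        intro v hv z hz
        have hvV : v ∈ V := by rw [hV]; exact hv
        have hzU : z ∈ U := by rw [hU]; exact hz
        rw [one_mul, ← mul_assoc]
        exact VU_le (Submodule.mul_mem_mul (Vmul htV hvV) hzU)
      -- u = s
      · intro v hv
        induction hv using Submodule.span_induction with
        | zero => intro z hz; simp only [zero_mul, mul_zero]; exact Submodule.zero_mem _
        | add v₁ v₂ h₁ h₂ ih₁ ih₂ =>
            intro z hz
            simp only [add_mul, mul_add]
            exact Submodule.add_mem _ (ih₁ z hz) (ih₂ z hz)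
        | smul r v h ih =>
            intro z hz
            simp only [smul_mul_assoc, mul_smul_comm]
            exact Submodule.smul_mem _ _ (ih z hz)
        | mem v hv =>
          rcases hv with h1 | h1 | h1 <;> rw [h1]
          · -- v = 1
            intro z hz
            have hzU : z ∈ U := by rw [hU]; exact hz
            rw [one_mul]
            exact VU_le (Submodule.mul_mem_mul htV (Umul hsU hzU))
          · -- v = t
            intro z hz
            induction hz using Submodule.span_induction with
            | zero => simp only [mul_zero]; exact Submodule.zero_mem _
            | add z₁ z₂ h₁ h₂ ih₁ ih₂ =>
                simp only [mul_add]; exact Submodule.add_mem _ ih₁ ih₂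
            | smul r z h ih =>
                simp only [mul_smul_comm]; exact Submodule.smul_mem _ _ ih
            | mem z hz =>
              rcases hz with h2 | h2 | h2 <;> rw [h2]
              · rw [mul_one]
                simpa [mul_assoc] using memM one_U htV hsU htV
              · -- t(s(t s))
                rw [← hbA s]
                simpa [mul_assoc] using memM hsU htV hs2U one_V
              · -- t(s(t(s s)))
                rw [← hbA (s*s)]
                simpa [mul_assoc] using memM hsU htV (Umul hs2U hsU) one_V
          · -- v = t*t
            intro z hz
            induction hz using Submodule.span_induction with
            | zero => simp only [mul_zero]; exact Submodule.zero_mem _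
            | add z₁ z₂ h₁ h₂ ih₁ ih₂ =>
                simp only [mul_add]; exact Submodule.add_mem _ ih₁ ih₂
            | smul r z h ih =>
                simp only [mul_smul_comm]; exact Submodule.smul_mem _ _ ih
            | mem z hz =>
              rcases hz with h2 | h2 | h2 <;> rw [h2]
              · rw [mul_one]
                simpa [mul_assoc] using memM one_U htV hsU ht2V
              · -- t(s(tt*s)) = t(s(t(t s)))
                simp only [mul_assoc]
                rw [← hbA (t*s), hb']
                simpa [mul_assoc] using memM hsU ht2V hsU htV
              · -- t(s(tt*(s s)))
                simp only [mul_assoc]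
                rw [← hbA (t*(s*s)), hbA s, hb']
                simpa [mul_assoc] using memM hsU (Vmul ht2V htV) hsU htV
      -- u = s*s
      · intro v hv
        induction hv using Submodule.span_induction with
        | zero => intro z hz; simp only [zero_mul, mul_zero]; exact Submodule.zero_mem _
        | add v₁ v₂ h₁ h₂ ih₁ ih₂ =>
            intro z hz
            simp only [add_mul, mul_add]
            exact Submodule.add_mem _ (ih₁ z hz) (ih₂ z hz)
        | smul r v h ih =>
            intro z hz
            simp only [smul_mul_assoc, mul_smul_comm]
            exact Submodule.smul_mem _ _ (ih z hz)
        | mem v hv =>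
          rcases hv with h1 | h1 | h1 <;> rw [h1]
          · intro z hz
            have hzU : z ∈ U := by rw [hU]; exact hz
            rw [one_mul]
            exact VU_le (Submodule.mul_mem_mul htV (Umul hs2U hzU))
          · -- v = t
            intro z hz
            induction hz using Submodule.span_induction with
            | zero => simp only [mul_zero]; exact Submodule.zero_mem _
            | add z₁ z₂ h₁ h₂ ih₁ ih₂ =>
                simp only [mul_add]; exact Submodule.add_mem _ ih₁ ih₂
            | smul r z h ih =>
                simp only [mul_smul_comm]; exact Submodule.smul_mem _ _ ih
            | mem z hz =>
              rcases hz with h2 | h2 | h2 <;> rw [h2]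
              · rw [mul_one]
                simpa [mul_assoc] using memM one_U htV hs2U htV
              · -- t((ss)(t s))
                simp only [mul_assoc]
                rw [hb', ← hbA (s*t)]
                simpa [mul_assoc] using memM hsU htV hs2U htV
              · -- t((ss)(t (ss)))
                simp only [mul_assoc]
                rw [hbA s, ← hbA (s*(t*s)), hb', hbA t]
                simpa [mul_assoc] using memM hsU ht2V hsU ht2V
          · -- v = t*t
            intro z hz
            induction hz using Submodule.span_induction with
            | zero => simp only [mul_zero]; exact Submodule.zero_mem _
            | add z₁ z₂ h₁ h₂ ih₁ ih₂ =>
                simp only [mul_add]; exact Submodule.add_mem _ ih₁ ih₂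
            | smul r z h ih =>
                simp only [mul_smul_comm]; exact Submodule.smul_mem _ _ ih
            | mem z hz =>
              rcases hz with h2 | h2 | h2 <;> rw [h2]
              · rw [mul_one]
                simpa [mul_assoc] using memM one_U htV hs2U ht2V
              · -- hard case t (ss (tt s))
                simp only [mul_assoc]
                rw [ht2 s]
                simp only [mul_add, mul_smul_comm]
                rw [hb', ← hbA (s*t), Jgen s]
                refine Submodule.add_mem _ (Submodule.add_mem _
                  (Submodule.smul_mem _ _ ?_) (Submodule.smul_mem _ _ ?_)) ?_
                · simpa [mul_assoc] using memM hsU htV hs2U htV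
                · exact VU_le (Submodule.mul_mem_mul htV (Umul hsU hs2U))
                · simpa [mul_assoc] using memM hσU ht2V hs2U one_V
              · -- hard case t (ss (tt (ss)))
                simp only [mul_assoc]
                rw [ht2 (s*s)]
                simp only [mul_add, mul_smul_comm]
                rw [hbA s, ← hbA (s*(t*s)), hb', hbA t, Jgen (s*s)]
                refine Submodule.add_mem _ (Submodule.add_mem _
                  (Submodule.smul_mem _ _ ?_) (Submodule.smul_mem _ _ ?_)) ?_
                · simpa [mul_assoc] using memM hsU ht2V hsU ht2V
                · exact VU_le (Submodule.mul_mem_mul htV (Umul hsU (Umul hsU hs2U)))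
                · simpa [mul_assoc] using memM hσU ht2V (Umul hsU hs2U) one_V
  -- closure of M under left multiplication by t
  have tM : ∀ m ∈ M, t*m ∈ M := by
    intro m hm
    refine Submodule.mul_induction_on hm (fun k hk w hw => ?_)
      (fun p q hp hq => by rw [mul_add]; exact Submodule.add_mem _ hp hq)
    have hk' : t * k ∈ M := by
      refine Submodule.mul_induction_on hk (fun x hx z hz => ?_)
        (fun p q hp hq => by rw [mul_add]; exact Submodule.add_mem _ hp hq)
      refine Submodule.mul_induction_on hx (fun u hu v hv => ?_)
        (fun p q hp hq => by rw [add_mul, mul_add]; exact Submodule.add_mem _ hp hq)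
      have := key3 u (by rw [← hU]; exact hu) v (by rw [← hV]; exact hv) z (by rw [← hU]; exact hz)
      simpa [mul_assoc] using this
    rw [← mul_assoc]
    exact MV_le (Submodule.mul_mem_mul hk' hw)
  have VM_le : ∀ v ∈ V, ∀ m ∈ M, v*m ∈ M := by
    intro v hv
    rw [hV] at hv
    induction hv using Submodule.span_induction with
    | zero => intro m hm; rw [zero_mul]; exact Submodule.zero_mem _
    | add v₁ v₂ h₁ h₂ ih₁ ih₂ =>
        intro m hm; rw [add_mul]; exact Submodule.add_mem _ (ih₁ m hm) (ih₂ m hm)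
    | smul r v h ih =>
        intro m hm; rw [smul_mul_assoc]; exact Submodule.smul_mem _ _ (ih m hm)
    | mem v hv =>
      rcases hv with h1 | h1 | h1 <;> rw [h1]
      · intro m hm; rw [one_mul]; exact hm
      · exact tM
      · intro m hm; rw [mul_assoc]; exact tM _ (tM m hm)
  -- conclude
  have hUVU_le : U*V*U ≤ M := fun x hx => by
    simpa using Submodule.mul_mem_mul hx one_V
  calc V*U*V*U = V*(U*V*U) := by rw [mul_assoc, mul_assoc, mul_assoc]
  _ ≤ M := Submodule.mul_le.2 (fun v hv k hk => VM_le v hv k (hUVU_le hk))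
variable {R A : Type*} [CommRing R] [Ring A] [Algebra R A]

private lemma stmt10_comm_case (x y : A) (hxy : x*y = y*x) :
    Subalgebra.toSubmodule (Algebra.adjoin R ({x} : Set A)) *
    Subalgebra.toSubmodule (Algebra.adjoin R ({y} : Set A)) =
    Subalgebra.toSubmodule (Algebra.adjoin R ({y} : Set A)) *
    Subalgebra.toSubmodule (Algebra.adjoin R ({x} : Set A)) := by
  have hyc : ∀ v ∈ Algebra.adjoin R ({y}:Set A), x * v = v * x := by
    intro v hv
    have hle : Algebra.adjoin R ({y}:Set A) ≤ Subalgebra.centralizer R {x} := by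
      refine Algebra.adjoin_le_iff.2 ?_
      rintro z rfl
      exact (Subalgebra.mem_centralizer_iff R).2 (by rintro g rfl; exact hxy)
    exact ((Subalgebra.mem_centralizer_iff R).1 (hle hv) x rfl)
  have hcomm : ∀ u ∈ Algebra.adjoin R ({x}:Set A), ∀ v ∈ Algebra.adjoin R ({y}:Set A),
      u*v = v*u := by
    intro u hu v hv
    have hle : Algebra.adjoin R ({x}:Set A) ≤ Subalgebra.centralizer R {v} := by
      refine Algebra.adjoin_le_iff.2 ?_
      rintro z rfl
      exact (Subalgebra.mem_centralizer_iff R).2 (by intro g hg; rw [Set.mem_singleton_iff] at hg; rw [hg]; exact (hyc v hv).symm)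
    exact ((Subalgebra.mem_centralizer_iff R).1 (hle hu) v rfl).symm
  apply le_antisymm
  · refine Submodule.mul_le.2 (fun u hu v hv => ?_)
    rw [hcomm u ((Subalgebra.mem_toSubmodule _).1 hu) v ((Subalgebra.mem_toSubmodule _).1 hv)]
    exact Submodule.mul_mem_mul hv hu
  · refine Submodule.mul_le.2 (fun v hv u hu => ?_)
    rw [← hcomm u ((Subalgebra.mem_toSubmodule _).1 hu) v ((Subalgebra.mem_toSubmodule _).1 hv)]
    exact Submodule.mul_mem_mul hu hv


end

private lemma stmt10_shuffle {R A : Type*} [CommRing R] [Ring A] [Algebra R A]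
    (X Y : Submodule R A) (h : X*Y = Y*X) : X*Y*X*Y = Y*X*Y*X := by
  rw [mul_assoc (X*Y) X Y, mul_assoc (Y*X) Y X, h]

/-- For `n ≥ 3` and all `1 ≤ i, j ≤ n-1`, in the cubic Hecke algebra
`A_n` one has the equality of `R`-submodules `u_i u_j u_i u_j = u_j u_i u_j u_i`,
where `u_k` is the `R`-subalgebra generated by `s_k`. -/
theorem stmt10 (R A : Type*) [CommRing R] [Ring A] [Algebra R A]
    (a b : R) (c : Rˣ) (n : ℕ) (hn : 3 ≤ n) (s : ℕ → A)
    (hbraid : ∀ i, 1 ≤ i → i + 1 ≤ n - 1 →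
      s i * s (i + 1) * s i = s (i + 1) * s i * s (i + 1))
    (hcomm : ∀ i j, 1 ≤ i → j ≤ n - 1 → i + 2 ≤ j → s i * s j = s j * s i)
    (hcubic : ∀ i, 1 ≤ i → i ≤ n - 1 →
      s i ^ 3 = a • s i ^ 2 + b • s i + (c : R) • (1 : A)) :
    ∀ i j, 1 ≤ i → i ≤ n - 1 → 1 ≤ j → j ≤ n - 1 →
      Subalgebra.toSubmodule (Algebra.adjoin R ({s i} : Set A)) *
      Subalgebra.toSubmodule (Algebra.adjoin R ({s j} : Set A)) *
      Subalgebra.toSubmodule (Algebra.adjoin R ({s i} : Set A)) *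
      Subalgebra.toSubmodule (Algebra.adjoin R ({s j} : Set A)) =
      Subalgebra.toSubmodule (Algebra.adjoin R ({s j} : Set A)) *
      Subalgebra.toSubmodule (Algebra.adjoin R ({s i} : Set A)) *
      Subalgebra.toSubmodule (Algebra.adjoin R ({s j} : Set A)) *
      Subalgebra.toSubmodule (Algebra.adjoin R ({s i} : Set A)) := by
  intro i j hi1 hin hj1 hjn
  by_cases hij : i = j
  · subst hij; rfl
  rcases Nat.lt_or_ge i j with h | h
  · by_cases hadj : j = i + 1
    · subst hadj
      have hb := hbraid i hi1 hjn
      exact le_antisymm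
        (stmt10_core a b c (s (i+1)) (s i) hb.symm (hcubic (i+1) (by omega) hjn)
          (hcubic i hi1 hin))
        (stmt10_core a b c (s i) (s (i+1)) hb (hcubic i hi1 hin)
          (hcubic (i+1) (by omega) hjn))
    · exact stmt10_shuffle _ _ (stmt10_comm_case (s i) (s j)
        (hcomm i j hi1 hjn (by omega)))
  · by_cases hadj : i = j + 1
    · subst hadj
      have hb := hbraid j hj1 hin
      exact le_antisymm
        (stmt10_core a b c (s j) (s (j+1)) hb (hcubic j hj1 hjn)
          (hcubic (j+1) (by omega) hin))
        (stmt10_core a b c (s (j+1)) (s j) hb.symm (hcubic (j+1) (by omega) hin)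
          (hcubic j hj1 hjn))
    · exact stmt10_shuffle _ _ (stmt10_comm_case (s i) (s j)
        ((hcomm j i hj1 hin (by omega)).symm))
end

section
/- In the cubic Hecke algebra A_3, one has s_1 s_2⁻¹ s_1 s_2⁻¹ − s_2⁻¹ s_1 s_2⁻¹ s_1 = (a/c) s_1 s_2 − (a/c) s_2 s_1 − (ab/c) s_1 s_2⁻¹ + (ab/c) s_2⁻¹ s_1 + b s_2⁻¹ s_1⁻¹ − b s_1⁻¹ s_2⁻¹. -/
/-- In the cubic Hecke algebra `A_3`,
`s_1 s_2⁻¹ s_1 s_2⁻¹ − s_2⁻¹ s_1 s_2⁻¹ s_1 = (a/c) s_1 s_2 − (a/c) s_2 s_1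
 − (ab/c) s_1 s_2⁻¹ + (ab/c) s_2⁻¹ s_1 + b s_2⁻¹ s_1⁻¹ − b s_1⁻¹ s_2⁻¹`,
where `t1 = s_1⁻¹`, `t2 = s_2⁻¹`. -/
theorem stmt11 (R A : Type*) [CommRing R] [Ring A] [Algebra R A]
    (a b : R) (c : Rˣ) (s1 s2 t1 t2 : A)
    (hbraid : s1 * s2 * s1 = s2 * s1 * s2)
    (hc1 : s1 ^ 3 = a • s1 ^ 2 + b • s1 + (c : R) • (1 : A))
    (hc2 : s2 ^ 3 = a • s2 ^ 2 + b • s2 + (c : R) • (1 : A))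
    (h1 : s1 * t1 = 1) (h1' : t1 * s1 = 1)
    (h2 : s2 * t2 = 1) (h2' : t2 * s2 = 1) :
    s1 * t2 * s1 * t2 - t2 * s1 * t2 * s1 =
      (a * (↑c⁻¹ : R)) • (s1 * s2) - (a * (↑c⁻¹ : R)) • (s2 * s1)
      - (a * b * (↑c⁻¹ : R)) • (s1 * t2) + (a * b * (↑c⁻¹ : R)) • (t2 * s1)
      + b • (t2 * t1) - b • (t1 * t2) := by
  set u : A := s2 ^ 2 - a • s2 - b • (1 : A) with hu_def
  set v : A := s1 ^ 2 - a • s1 - b • (1 : A) with hv_def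
  have hu : s2 * u = (c : R) • (1 : A) := by
    rw [hu_def]; linear_combination (norm := noncomm_ring) hc2
  have hv : s1 * v = (c : R) • (1 : A) := by
    rw [hv_def]; linear_combination (norm := noncomm_ring) hc1
  have ht2 : t2 = (↑c⁻¹ : R) • u := by
    calc t2 = t2 * ((↑c⁻¹ : R) • (s2 * u)) := by
          rw [hu, smul_smul, Units.inv_mul, one_smul, mul_one]
      _ = (↑c⁻¹ : R) • (t2 * s2 * u) := by rw [mul_smul_comm, mul_assoc]
      _ = (↑c⁻¹ : R) • u := by rw [h2', one_mul]
  have ht1 : t1 = (↑c⁻¹ : R) • v := by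
    calc t1 = t1 * ((↑c⁻¹ : R) • (s1 * v)) := by
          rw [hv, smul_smul, Units.inv_mul, one_smul, mul_one]
      _ = (↑c⁻¹ : R) • (t1 * s1 * v) := by rw [mul_smul_comm, mul_assoc]
      _ = (↑c⁻¹ : R) • v := by rw [h1', one_mul]
  have he1 : s1 * s2 ^ 2 * s1 * s2 = s2 * s1 * s2 ^ 2 * s1 := by
    linear_combination (norm := noncomm_ring) hbraid * (s2 * s1) - (s1 * s2) * hbraid
  have hBIG : s1 * u * s1 * u - u * s1 * u * s1 =
      (a * (c : R)) • (s1 * s2) - (a * (c : R)) • (s2 * s1)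
      - (a * b) • (s1 * u) + (a * b) • (u * s1)
      + b • (u * v) - b • (v * u) := by
    rw [hu_def, hv_def]
    linear_combination (norm :=
        (simp only [mul_add, add_mul, mul_sub, sub_mul, smul_add, smul_sub, smul_smul,
          mul_smul_comm, smul_mul_assoc, mul_assoc, pow_succ, pow_zero, one_mul, mul_one,
          mul_neg, neg_mul, smul_neg, neg_smul]; module))
      he1 * s2 + s2 * he1 - a • he1 - a • (hbraid * s2 ^ 2) + a • (s2 ^ 2 * hbraid)
      + (a * a) • (hbraid * s2) - (a * a) • (s2 * hbraid)
      - a • (s2 * s1 * hc2) + a • (hc2 * (s1 * s2))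
  have h12 : ((↑c⁻¹ : R) * (c : R)) • (s1 * s2) = (1 : R) • (s1 * s2) := by
    rw [Units.inv_mul]
  have h21 : ((↑c⁻¹ : R) * (c : R)) • (s2 * s1) = (1 : R) • (s2 * s1) := by
    rw [Units.inv_mul]
  rw [ht1, ht2]
  linear_combination (norm :=
      (simp only [mul_add, add_mul, mul_sub, sub_mul, smul_add, smul_sub, smul_smul,
        mul_smul_comm, smul_mul_assoc, mul_assoc, pow_succ, pow_zero, one_mul, mul_one,
        mul_neg, neg_mul, smul_neg, neg_smul]; module))
    ((↑c⁻¹ : R) * (↑c⁻¹ : R)) • hBIG + (a * (↑c⁻¹ : R)) • h12 - (a * (↑c⁻¹ : R)) • h21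
end

section
/- In the braid group B_5, the elements y_2 = s_1², y_3 = s_2 s_1² s_2, y_4 = s_3 s_2 s_1² s_2 s_3 and y_5 = s_4 s_3 s_2 s_1² s_2 s_3 s_4 pairwise commute. -/
section helpers
variable {H : Type*} [Group H]

private lemma ctx3 {s t u s' t' u' : H} (h : s*t*u = s'*t'*u') :
    ∀ x : H, s*(t*(u*x)) = s'*(t'*(u'*x)) := fun x => by
  rw [← mul_assoc, ← mul_assoc, h, mul_assoc, mul_assoc]

private lemma ctx2 {s t s' t' : H} (h : s*t = s'*t') :
    ∀ x : H, s*(t*x) = s'*(t'*x) := fun x => by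
  rw [← mul_assoc, h, mul_assoc]

lemma braid_P_base (a s : H) (hb : a*s*a = s*a*s) :
    s*(a*a)*s*(a*a) = (a*a)*s*(a*a)*s := by
  have hb' := ctx3 hb
  have hbt : a*(s*a) = s*(a*s) := by simp only [← mul_assoc]; exact hb
  simp only [mul_assoc]
  conv_lhs => rw [hb', ← hb']
  conv_rhs => rw [hb', ← hbt]

lemma braid_P_step (s t y : H) (hb : s*t*s = t*s*t) (hc : t*y = y*t)
    (hy : s*y*s*y = y*s*y*s) :
    t*(s*y*s)*t*(s*y*s) = (s*y*s)*t*(s*y*s)*t := by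
  have hb' := ctx3 hb
  have hc' := ctx2 hc
  have hbt : s*(t*s) = t*(s*t) := by simp only [← mul_assoc]; exact hb
  have hy2 : ∀ x : H, s*(y*(s*(y*x))) = y*(s*(y*(s*x))) := fun x => by
    simp only [← mul_assoc]; rw [hy]
  simp only [mul_assoc]
  conv_lhs => rw [hb', hc', ← hc', ← hb', hy2, hbt]
  conv_rhs => rw [hb', hc', ← hc']

end helpers

/-- In the braid group `B_5`, the elements `y_2 = s_1²`,
`y_3 = s_2 s_1² s_2`, `y_4 = s_3 s_2 s_1² s_2 s_3`, `y_5 = s_4 s_3 s_2 s_1² s_2 s_3 s_4`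
pairwise commute. -/
theorem stmt15 (G : Type*) [Group G] (s1 s2 s3 s4 : G)
    (h12 : s1 * s2 * s1 = s2 * s1 * s2)
    (h23 : s2 * s3 * s2 = s3 * s2 * s3)
    (h34 : s3 * s4 * s3 = s4 * s3 * s4)
    (h13 : s1 * s3 = s3 * s1)
    (h14 : s1 * s4 = s4 * s1)
    (h24 : s2 * s4 = s4 * s2) :
    let y2 := s1 * s1
    let y3 := s2 * s1 * s1 * s2
    let y4 := s3 * s2 * s1 * s1 * s2 * s3
    let y5 := s4 * s3 * s2 * s1 * s1 * s2 * s3 * s4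
    y2 * y3 = y3 * y2 ∧ y2 * y4 = y4 * y2 ∧ y2 * y5 = y5 * y2 ∧
    y3 * y4 = y4 * y3 ∧ y3 * y5 = y5 * y3 ∧ y4 * y5 = y5 * y4 := by
  intro y2 y3 y4 y5
  have c13 : Commute s1 s3 := h13
  have c14 : Commute s1 s4 := h14
  have c24 : Commute s2 s4 := h24
  have cy2s3 : Commute (s1*s1) s3 := c13.mul_left c13
  have cy2s4 : Commute (s1*s1) s4 := c14.mul_left c14
  have cy3s4 : Commute (s2*(s1*s1)*s2) s4 := (c24.mul_left cy2s4).mul_left c24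
  have P2 := braid_P_base s1 s2 h12
  have P3 := braid_P_step s2 s3 (s1*s1) h23 cy2s3.symm P2
  have P4 := braid_P_step s3 s4 (s2*(s1*s1)*s2) h34 cy3s4.symm P3
  -- pairwise commutation facts in bracketed form
  have C23 : Commute (s1*s1) (s2*(s1*s1)*s2) := by
    unfold Commute SemiconjBy; simp only [mul_assoc] at P2 ⊢; exact P2.symm
  have C34 : Commute (s2*(s1*s1)*s2) (s3*(s2*(s1*s1)*s2)*s3) := by
    unfold Commute SemiconjBy; simp only [mul_assoc] at P3 ⊢; exact P3.symm
  have C45 : Commute (s3*(s2*(s1*s1)*s2)*s3) (s4*(s3*(s2*(s1*s1)*s2)*s3)*s4) := by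
    unfold Commute SemiconjBy; simp only [mul_assoc] at P4 ⊢; exact P4.symm
  have C24 : Commute (s1*s1) (s3*(s2*(s1*s1)*s2)*s3) :=
    (cy2s3.mul_right C23).mul_right cy2s3
  have C25 : Commute (s1*s1) (s4*(s3*(s2*(s1*s1)*s2)*s3)*s4) :=
    (cy2s4.mul_right C24).mul_right cy2s4
  have C35 : Commute (s2*(s1*s1)*s2) (s4*(s3*(s2*(s1*s1)*s2)*s3)*s4) :=
    (cy3s4.mul_right C34).mul_right cy3s4
  refine ⟨?_, ?_, ?_, ?_, ?_, ?_⟩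
  · show (s1*s1)*(s2*s1*s1*s2) = (s2*s1*s1*s2)*(s1*s1)
    have := C23; unfold Commute SemiconjBy at this
    simp only [mul_assoc] at this ⊢; exact this
  · show (s1*s1)*(s3*s2*s1*s1*s2*s3) = (s3*s2*s1*s1*s2*s3)*(s1*s1)
    have := C24; unfold Commute SemiconjBy at this
    simp only [mul_assoc] at this ⊢; exact this
  · show (s1*s1)*(s4*s3*s2*s1*s1*s2*s3*s4) = (s4*s3*s2*s1*s1*s2*s3*s4)*(s1*s1)
    have := C25; unfold Commute SemiconjBy at this
    simp only [mul_assoc] at this ⊢; exact this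
  · show (s2*s1*s1*s2)*(s3*s2*s1*s1*s2*s3) = (s3*s2*s1*s1*s2*s3)*(s2*s1*s1*s2)
    have := C34; unfold Commute SemiconjBy at this
    simp only [mul_assoc] at this ⊢; exact this
  · show (s2*s1*s1*s2)*(s4*s3*s2*s1*s1*s2*s3*s4) = (s4*s3*s2*s1*s1*s2*s3*s4)*(s2*s1*s1*s2)
    have := C35; unfold Commute SemiconjBy at this
    simp only [mul_assoc] at this ⊢; exact this
  · show (s3*s2*s1*s1*s2*s3)*(s4*s3*s2*s1*s1*s2*s3*s4) = (s4*s3*s2*s1*s1*s2*s3*s4)*(s3*s2*s1*s1*s2*s3)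
    have := C45; unfold Commute SemiconjBy at this
    simp only [mul_assoc] at this ⊢; exact this
end
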